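/- arXiv:2308.00173 — 4 statements merged into one kernel-verified Lean document; each statement's English description precedes it below -/
import Mathlib

section
/- Let f : ℝ → ℝ be defined by the everywhere-convergent power series f(y) = ∑_{n≥0} yⁿ/(n!)². Then f is twice differentiable on ℝ and satisfies the second-order ODE y·f''(y) + f'(y) = f(y) for every y ∈ ℝ. -/
open scoped Nat

/-- summability helper -/
lemma aux_summable (c : ℕ → ℝ) (hc : ∀ n, |c n| ≤ 1 / (n ! : ℝ)) (y : ℝ) :
    Summable fun n => c n * y ^ n := by
  apply Summable.of_norm
  apply Summable.of_nonneg_of_le (fun n => norm_nonneg _)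
    (fun n => ?_) (Real.summable_pow_div_factorial |y|)
  have h1 : ‖c n * y ^ n‖ = |c n| * |y| ^ n := by
    rw [norm_mul, Real.norm_eq_abs, Real.norm_eq_abs, abs_pow]
  rw [h1]
  calc |c n| * |y| ^ n ≤ (1 / (n ! : ℝ)) * |y| ^ n :=
        mul_le_mul_of_nonneg_right (hc n) (by positivity)
    _ = |y| ^ n / (n ! : ℝ) := by ring

lemma aux_hasDerivAt (c : ℕ → ℝ) (hc : ∀ n, |c n| ≤ 1 / (n ! : ℝ)) (y : ℝ) :
    HasDerivAt (fun x => ∑' n, c n * x ^ n)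
      (∑' n : ℕ, ((n : ℝ) + 1) * c (n + 1) * y ^ n) y := by
  set R : ℝ := |y| + 1 with hR
  have hR1 : (1 : ℝ) ≤ R := by simp only [hR]; linarith [abs_nonneg y]
  have hyR : y ∈ Metric.ball (0 : ℝ) R := by
    simp [Real.dist_eq, hR]
  have hu : Summable fun n : ℕ => (2 * R) ^ n / (n ! : ℝ) :=
    Real.summable_pow_div_factorial (2 * R)
  have key : HasDerivAt (fun x => ∑' n, c n * x ^ n)
      (∑' n, c n * ((n : ℝ) * y ^ (n - 1))) y := by
    apply hasDerivAt_tsum_of_isPreconnected hu Metric.isOpen_ball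
      ((convex_ball (0:ℝ) R).isPreconnected)
      (g := fun n x => c n * x ^ n) (g' := fun n x => c n * ((n : ℝ) * x ^ (n - 1)))
      (fun n x _ => (hasDerivAt_pow n x).const_mul (c n))
      (fun n x hx => ?_) hyR (aux_summable c hc y) hyR
    have hxR : |x| ≤ R := by
      have := mem_ball_iff_norm.mp hx
      simp only [sub_zero, Real.norm_eq_abs] at this
      linarith
    have hn2 : (n : ℝ) ≤ 2 ^ n := by
      exact_mod_cast Nat.le_of_lt (Nat.lt_two_pow_self)
    have hb : ‖c n * ((n : ℝ) * x ^ (n - 1))‖ ≤ (1 / (n ! : ℝ)) * ((n : ℝ) * R ^ n) := by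
      rw [norm_mul, norm_mul, Real.norm_eq_abs, Real.norm_eq_abs, Real.norm_eq_abs, abs_pow]
      have h1 : |x| ^ (n - 1) ≤ R ^ n := by
        calc |x| ^ (n - 1) ≤ R ^ (n - 1) := pow_le_pow_left₀ (abs_nonneg x) hxR _
          _ ≤ R ^ n := pow_le_pow_right₀ hR1 (Nat.sub_le n 1)
      rw [Nat.abs_cast]
      apply mul_le_mul (hc n) (mul_le_mul_of_nonneg_left h1 (Nat.cast_nonneg n))
        (by positivity) (by positivity)
    calc ‖c n * ((n : ℝ) * x ^ (n - 1))‖ ≤ (1 / (n ! : ℝ)) * ((n : ℝ) * R ^ n) := hb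
      _ ≤ (1 / (n ! : ℝ)) * (2 ^ n * R ^ n) :=
        mul_le_mul_of_nonneg_left (mul_le_mul_of_nonneg_right hn2 (by positivity))
          (by positivity)
      _ = (2 * R) ^ n / (n ! : ℝ) := by rw [mul_pow]; ring
  convert key using 1
  have hsum : Summable fun n : ℕ => c n * ((n : ℝ) * y ^ (n - 1)) := by
    apply Summable.of_norm
    apply Summable.of_nonneg_of_le (fun n => norm_nonneg _) (fun n => ?_) hu
    have hxR : |y| ≤ R := by simp [hR]
    have hn2 : (n : ℝ) ≤ 2 ^ n := by
      exact_mod_cast Nat.le_of_lt (Nat.lt_two_pow_self)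
    calc ‖c n * ((n : ℝ) * y ^ (n - 1))‖
        = |c n| * ((n : ℝ) * |y| ^ (n - 1)) := by
          rw [norm_mul, norm_mul, Real.norm_eq_abs, Real.norm_eq_abs, Real.norm_eq_abs,
            abs_pow, Nat.abs_cast]
      _ ≤ (1 / (n ! : ℝ)) * (2 ^ n * R ^ n) := by
          apply mul_le_mul (hc n) ?_ (by positivity) (by positivity)
          apply mul_le_mul hn2 ?_ (by positivity) (by positivity)
          calc |y| ^ (n - 1) ≤ R ^ (n - 1) := pow_le_pow_left₀ (abs_nonneg y) hxR _
            _ ≤ R ^ n := pow_le_pow_right₀ hR1 (Nat.sub_le n 1)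
      _ = (2 * R) ^ n / (n ! : ℝ) := by rw [mul_pow]; ring
  rw [Summable.tsum_eq_zero_add hsum]
  simp only [Nat.cast_zero, zero_mul, mul_zero, Nat.cast_add, Nat.cast_one, zero_add,
    Nat.add_sub_cancel]
  apply tsum_congr
  intro n
  ring

/-- The entire function `f(y) = ∑_{n≥0} yⁿ/(n!)²` is twice differentiable
on `ℝ` and satisfies the ODE `y·f''(y) + f'(y) = f(y)` for every `y ∈ ℝ`. -/
theorem bessel_type_ode (f : ℝ → ℝ)
    (hf : ∀ y : ℝ, f y = ∑' n : ℕ, y ^ n / (Nat.factorial n : ℝ) ^ 2) :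
    Differentiable ℝ f ∧ Differentiable ℝ (deriv f) ∧
      ∀ y : ℝ, y * deriv (deriv f) y + deriv f y = f y := by
  classical
  set c0 : ℕ → ℝ := fun n => 1 / (n ! : ℝ) ^ 2 with hc0
  set c1 : ℕ → ℝ := fun n => ((n : ℝ) + 1) * c0 (n + 1) with hc1
  set c2 : ℕ → ℝ := fun n => ((n : ℝ) + 1) * c1 (n + 1) with hc2
  have hfac1 : ∀ n : ℕ, (1 : ℝ) ≤ (n ! : ℝ) := fun n => by
    exact_mod_cast Nat.one_le_iff_ne_zero.mpr (Nat.factorial_ne_zero n)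
  have hfacpos : ∀ n : ℕ, (0 : ℝ) < (n ! : ℝ) := fun n => lt_of_lt_of_le one_pos (hfac1 n)
  have hb0 : ∀ n, |c0 n| ≤ 1 / (n ! : ℝ) := by
    intro n
    rw [abs_of_nonneg (by positivity)]
    apply div_le_div_of_nonneg_left one_pos.le (hfacpos n)
    calc (n ! : ℝ) = (n ! : ℝ) * 1 := (mul_one _).symm
      _ ≤ (n ! : ℝ) * (n ! : ℝ) := mul_le_mul_of_nonneg_left (hfac1 n) (hfacpos n).le
      _ = (n ! : ℝ) ^ 2 := (sq _).symm
  have hb1 : ∀ n, |c1 n| ≤ 1 / (n ! : ℝ) := by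
    intro n
    have he : c1 n = 1 / ((n ! : ℝ) * ((n + 1)! : ℝ)) := by
      simp only [hc1, hc0]
      have := hfacpos n
      push_cast [Nat.factorial_succ]
      field_simp
    rw [he, abs_of_nonneg (by positivity)]
    apply div_le_div_of_nonneg_left one_pos.le (hfacpos n)
    calc (n ! : ℝ) = (n ! : ℝ) * 1 := (mul_one _).symm
      _ ≤ (n ! : ℝ) * ((n + 1)! : ℝ) := mul_le_mul_of_nonneg_left (hfac1 _) (hfacpos n).le
  have hb2 : ∀ n, |c2 n| ≤ 1 / (n ! : ℝ) := by
    intro n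
    have he : c2 n = 1 / ((n ! : ℝ) * ((n + 1 + 1)! : ℝ)) := by
      simp only [hc2, hc1, hc0]
      have := hfacpos n
      push_cast [Nat.factorial_succ]
      field_simp
    rw [he, abs_of_nonneg (by positivity)]
    apply div_le_div_of_nonneg_left one_pos.le (hfacpos n)
    calc (n ! : ℝ) = (n ! : ℝ) * 1 := (mul_one _).symm
      _ ≤ (n ! : ℝ) * ((n + 1 + 1)! : ℝ) := mul_le_mul_of_nonneg_left (hfac1 _) (hfacpos n).le
  have hfeq : f = fun y => ∑' n, c0 n * y ^ n := by
    funext y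
    rw [hf y]
    exact tsum_congr fun n => by simp only [hc0]; ring
  set g : ℝ → ℝ := fun y => ∑' n, c1 n * y ^ n with hg
  set h : ℝ → ℝ := fun y => ∑' n, c2 n * y ^ n with hh
  have hdf : ∀ y, HasDerivAt f (g y) y := by
    intro y
    rw [hfeq]
    exact aux_hasDerivAt c0 hb0 y
  have hdg : ∀ y, HasDerivAt g (h y) y := fun y => aux_hasDerivAt c1 hb1 y
  have hderivf : deriv f = g := funext fun y => (hdf y).deriv
  refine ⟨fun y => (hdf y).differentiableAt, ?_, ?_⟩
  · rw [hderivf]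
    exact fun y => (hdg y).differentiableAt
  · intro y
    have hderivg : deriv (deriv f) y = h y := by
      rw [hderivf]; exact (hdg y).deriv
    rw [hderivg, hderivf]
    have hs2 : Summable fun n => c2 n * y ^ n := aux_summable c2 hb2 y
    have hs1 : Summable fun n => c1 n * y ^ n := aux_summable c1 hb1 y
    have hs0 : Summable fun n => c0 n * y ^ n := aux_summable c0 hb0 y
    have hyh : y * h y = ∑' n, c2 n * y ^ (n + 1) := by
      simp only [hh]
      rw [← tsum_mul_left]
      exact tsum_congr fun n => by ring
    have hgsplit : g y = c1 0 + ∑' n, c1 (n + 1) * y ^ (n + 1) := by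
      simp only [hg]; rw [Summable.tsum_eq_zero_add hs1]; simp
    have hfsplit : f y = c0 0 + ∑' n, c0 (n + 1) * y ^ (n + 1) := by
      simp only [hfeq]; rw [Summable.tsum_eq_zero_add hs0]; simp
    have hs2' : Summable fun n => c2 n * y ^ (n + 1) := by
      have := hs2.mul_left y
      convert this using 2 with n
      case e'_3 => rfl
      case e'_5 => ring
    have hcoef : ∀ n : ℕ, c2 n + c1 (n + 1) = c0 (n + 1) := by
      intro n
      simp only [hc2, hc1, hc0]
      have h0 := hfacpos n
      push_cast [Nat.factorial_succ]
      field_simp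
    have hs1' : Summable fun n => c1 (n + 1) * y ^ (n + 1) := by
      have h2 : Summable fun n => c0 (n + 1) * y ^ (n + 1) - c2 n * y ^ (n + 1) := by
        apply Summable.sub ?_ hs2'
        exact (aux_summable c0 hb0 y).comp_injective (add_left_injective 1)
      convert h2 using 2 with n
      rw [← hcoef n]
      ring
    have hsum_eq : (∑' n, c2 n * y ^ (n + 1)) + ∑' n, c1 (n + 1) * y ^ (n + 1)
        = ∑' n, c0 (n + 1) * y ^ (n + 1) := by
      rw [← Summable.tsum_add hs2' hs1']
      exact tsum_congr fun n => by rw [← add_mul, hcoef n]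
    have hc10 : c1 0 = c0 0 := by norm_num [hc1, hc0]
    rw [hyh, hgsplit, hfsplit, hc10]
    linarith [hsum_eq]
end

section
/- Let T, X > 0, let K : [0,T] × [0,X] → ℝ be bounded and measurable, and let y₀ ∈ ℝ. Then there exists a unique continuous function m : [0,T] × [0,X] → ℝ satisfying the two-parameter linear Volterra integral equation m(t,x) = y₀ + ∫₀ᵗ ∫₀ˣ K(s,a) m(s,a) da ds for all (t,x) ∈ [0,T] × [0,X]. -/
open Set MeasureTheory

section VolterraAux

open Function intervalIntegral
open scoped BoundedContinuousFunction

noncomputable def vcl (T t : ℝ) : ℝ := max 0 (min t T)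

lemma vcl_nonneg (T t : ℝ) : 0 ≤ vcl T t := le_max_left _ _

lemma vcl_le {T : ℝ} (hT : 0 ≤ T) (t : ℝ) : vcl T t ≤ T := max_le hT (min_le_right _ _)

lemma vcl_mem {T : ℝ} (hT : 0 ≤ T) (t : ℝ) : vcl T t ∈ Icc (0:ℝ) T :=
  ⟨vcl_nonneg T t, vcl_le hT t⟩

lemma vcl_eq_self {T t : ℝ} (h0 : 0 ≤ t) (h1 : t ≤ T) : vcl T t = t := by
  unfold vcl; rw [min_eq_left h1, max_eq_right h0]

lemma vcl_abs_sub (T t t' : ℝ) : |vcl T t - vcl T t'| ≤ |t - t'| := by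
  refine le_trans ?_ (le_trans (abs_min_sub_min_le_max t T t' T) ?_)
  · have := abs_max_sub_max_le_abs (min t T) (min t' T) 0
    simpa [vcl, max_comm] using this
  · simp

lemma continuous_vcl (T : ℝ) : Continuous (vcl T) :=
  continuous_const.max (continuous_id.min continuous_const)

lemma measurable_vcl (T : ℝ) : Measurable (vcl T) := (continuous_vcl T).measurable

lemma ii_of_bounded {f : ℝ → ℝ} {M : ℝ} (hm : AEStronglyMeasurable f volume)
    (hb : ∀ x, |f x| ≤ M) (a b : ℝ) : IntervalIntegrable f volume a b := by
  rw [intervalIntegrable_iff]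
  exact Measure.integrableOn_of_bounded (by rw [Set.uIoc]; exact measure_Ioc_lt_top.ne)
    hm (Filter.Eventually.of_forall (fun x => by simpa using hb x))

variable {M T X C lam y₀ : ℝ} {h : ℝ × ℝ → ℝ} {Kc : ℝ → ℝ → ℝ}

lemma inner_ii (hm : Measurable h) (hb : ∀ p, |h p| ≤ M) (s c d : ℝ) :
    IntervalIntegrable (fun a => h (s, a)) volume c d :=
  ii_of_bounded (hm.comp (measurable_const.prodMk measurable_id)).aestronglyMeasurable
    (fun a => hb (s, a)) c d

lemma w_bound (hb : ∀ p, |h p| ≤ M) (s c : ℝ) :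
    |∫ a in (0:ℝ)..c, h (s, a)| ≤ M * |c| := by
  have := intervalIntegral.norm_integral_le_of_norm_le_const
    (f := fun a => h (s, a)) (a := (0:ℝ)) (b := c) (C := M)
    (fun x _ => by simpa using hb (s, x))
  simpa [Real.norm_eq_abs] using this

lemma w_meas (hm : Measurable h) {c : ℝ} (hc : 0 ≤ c) :
    Measurable fun s => ∫ a in (0:ℝ)..c, h (s, a) := by
  have : (fun s => ∫ a in (0:ℝ)..c, h (s, a))
      = fun s => ∫ a, h (s, a) ∂(volume.restrict (Ioc 0 c)) := by
    funext s; rw [intervalIntegral.integral_of_le hc]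
  rw [this]
  exact (hm.stronglyMeasurable.integral_prod_right').measurable

lemma w_ii (hm : Measurable h) (hb : ∀ p, |h p| ≤ M) {c : ℝ} (hc : 0 ≤ c) (e f : ℝ) :
    IntervalIntegrable (fun s => ∫ a in (0:ℝ)..c, h (s, a)) volume e f :=
  ii_of_bounded (w_meas hm hc).aestronglyMeasurable (fun s => w_bound hb s c) e f

lemma w_sub_bound (hm : Measurable h) (hb : ∀ p, |h p| ≤ M) (s c c' : ℝ) :
    |(∫ a in (0:ℝ)..c, h (s, a)) - ∫ a in (0:ℝ)..c', h (s, a)| ≤ M * |c - c'| := by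
  rw [intervalIntegral.integral_interval_sub_left (inner_ii hm hb s 0 c) (inner_ii hm hb s 0 c')]
  have := intervalIntegral.norm_integral_le_of_norm_le_const
    (f := fun a => h (s, a)) (a := c') (b := c) (C := M)
    (fun x _ => by simpa using hb (s, x))
  simpa [Real.norm_eq_abs] using this

lemma F_bound (hb : ∀ p, |h p| ≤ M) (hT : 0 ≤ T) (hX : 0 ≤ X)
    (hM : 0 ≤ M) (p : ℝ × ℝ) :
    |∫ s in (0:ℝ)..vcl T p.1, ∫ a in (0:ℝ)..vcl X p.2, h (s, a)| ≤ M * X * T := by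
  have hbw : ∀ s ∈ uIoc (0:ℝ) (vcl T p.1), ‖∫ a in (0:ℝ)..vcl X p.2, h (s, a)‖ ≤ M * X := by
    intro s _
    rw [Real.norm_eq_abs]
    refine (w_bound hb s _).trans ?_
    rw [abs_of_nonneg (vcl_nonneg X p.2)]
    exact mul_le_mul_of_nonneg_left (vcl_le hX _) hM
  have := intervalIntegral.norm_integral_le_of_norm_le_const hbw
  rw [Real.norm_eq_abs] at this
  refine this.trans ?_
  rw [sub_zero, abs_of_nonneg (vcl_nonneg T p.1)]
  exact mul_le_mul_of_nonneg_left (vcl_le hT _) (by positivity)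

lemma F_cont (hm : Measurable h) (hb : ∀ p, |h p| ≤ M) (hT : 0 ≤ T) (hX : 0 ≤ X)
    (hM : 0 ≤ M) :
    Continuous fun p : ℝ × ℝ => ∫ s in (0:ℝ)..vcl T p.1, ∫ a in (0:ℝ)..vcl X p.2, h (s, a) := by
  refine (LipschitzWith.of_dist_le_mul (K := Real.toNNReal (M * (X + T))) ?_).continuous
  intro p q
  set d1 := vcl T p.1; set d2 := vcl T q.1; set c1 := vcl X p.2; set c2 := vcl X q.2
  have hii1 : IntervalIntegrable (fun s => ∫ a in (0:ℝ)..c1, h (s, a)) volume 0 d1 :=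
    w_ii hm hb (vcl_nonneg X p.2) _ _
  have hii1' : IntervalIntegrable (fun s => ∫ a in (0:ℝ)..c1, h (s, a)) volume 0 d2 :=
    w_ii hm hb (vcl_nonneg X p.2) _ _
  have hii2 : IntervalIntegrable (fun s => ∫ a in (0:ℝ)..c2, h (s, a)) volume 0 d2 :=
    w_ii hm hb (vcl_nonneg X q.2) _ _
  have key : (∫ s in (0:ℝ)..d1, ∫ a in (0:ℝ)..c1, h (s, a))
      - (∫ s in (0:ℝ)..d2, ∫ a in (0:ℝ)..c2, h (s, a))
      = (∫ s in d2..d1, ∫ a in (0:ℝ)..c1, h (s, a))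
        + ∫ s in (0:ℝ)..d2, ((∫ a in (0:ℝ)..c1, h (s, a)) - ∫ a in (0:ℝ)..c2, h (s, a)) := by
    rw [intervalIntegral.integral_sub hii1' hii2]
    rw [← intervalIntegral.integral_interval_sub_left hii1 hii1']
    ring
  have b1 : |∫ s in d2..d1, ∫ a in (0:ℝ)..c1, h (s, a)| ≤ M * X * |p.1 - q.1| := by
    have hbw : ∀ s ∈ uIoc d2 d1, ‖∫ a in (0:ℝ)..c1, h (s, a)‖ ≤ M * X := by
      intro s _
      rw [Real.norm_eq_abs]
      refine (w_bound hb s _).trans ?_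
      rw [abs_of_nonneg (vcl_nonneg X p.2)]
      exact mul_le_mul_of_nonneg_left (vcl_le hX _) hM
    have := intervalIntegral.norm_integral_le_of_norm_le_const hbw
    rw [Real.norm_eq_abs] at this
    refine this.trans ?_
    exact mul_le_mul_of_nonneg_left ((abs_sub_comm d1 d2 ▸ vcl_abs_sub T p.1 q.1)) (by positivity)
  have b2 : |∫ s in (0:ℝ)..d2, ((∫ a in (0:ℝ)..c1, h (s, a)) - ∫ a in (0:ℝ)..c2, h (s, a))|
      ≤ M * |p.2 - q.2| * T := by
    have hbw : ∀ s ∈ uIoc (0:ℝ) d2,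
        ‖(∫ a in (0:ℝ)..c1, h (s, a)) - ∫ a in (0:ℝ)..c2, h (s, a)‖ ≤ M * |p.2 - q.2| := by
      intro s _
      rw [Real.norm_eq_abs]
      exact (w_sub_bound hm hb s c1 c2).trans
        (mul_le_mul_of_nonneg_left (vcl_abs_sub X p.2 q.2) hM)
    have := intervalIntegral.norm_integral_le_of_norm_le_const hbw
    rw [Real.norm_eq_abs] at this
    refine this.trans ?_
    rw [sub_zero, abs_of_nonneg (vcl_nonneg T q.1)]
    exact mul_le_mul_of_nonneg_left (vcl_le hT _) (by positivity)
  rw [Real.dist_eq, key]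
  have hd1 : |p.1 - q.1| ≤ dist p q := by
    rw [Prod.dist_eq]; exact le_trans (le_of_eq (Real.dist_eq p.1 q.1).symm) (le_max_left _ _)
  have hd2 : |p.2 - q.2| ≤ dist p q := by
    rw [Prod.dist_eq]; exact le_trans (le_of_eq (Real.dist_eq p.2 q.2).symm) (le_max_right _ _)
  calc |_ + _| ≤ M * X * |p.1 - q.1| + M * |p.2 - q.2| * T :=
        (abs_add_le _ _).trans (add_le_add b1 b2)
    _ ≤ M * X * dist p q + M * dist p q * T := by
        refine add_le_add (mul_le_mul_of_nonneg_left hd1 (by positivity)) ?_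
        exact mul_le_mul_of_nonneg_right (mul_le_mul_of_nonneg_left hd2 hM) hT
    _ = M * (X + T) * dist p q := by ring
    _ = (Real.toNNReal (M * (X + T)) : ℝ) * dist p q := by
        rw [Real.coe_toNNReal _ (by positivity)]

lemma integral_exp_mul {lam : ℝ} (hlam : 0 < lam) (d : ℝ) :
    ∫ s in (0:ℝ)..d, Real.exp (lam * s) = (Real.exp (lam * d) - 1) / lam := by
  rw [intervalIntegral.integral_comp_mul_left (fun x => Real.exp x) hlam.ne',
    integral_exp]
  simp [smul_eq_mul, mul_comm, div_eq_inv_mul]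

lemma exp_discount {lam d : ℝ} (hlam : 0 < lam) (A : ℝ) (hA : 0 ≤ A) :
    Real.exp (-(lam * d)) * (A * ((Real.exp (lam * d) - 1) / lam)) ≤ A / lam := by
  rw [Real.exp_neg]
  have h1 : Real.exp (lam * d) - 1 ≤ Real.exp (lam * d) := by linarith
  calc (Real.exp (lam * d))⁻¹ * (A * ((Real.exp (lam * d) - 1) / lam))
      ≤ (Real.exp (lam * d))⁻¹ * (A * (Real.exp (lam * d) / lam)) := by
        refine mul_le_mul_of_nonneg_left ?_ (by positivity)
        exact mul_le_mul_of_nonneg_left (by gcongr) hA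
    _ = A / lam := by field_simp

/-- the integrand -/
noncomputable def hh (T lam : ℝ) (Kc : ℝ → ℝ → ℝ) (g : ℝ × ℝ →ᵇ ℝ) : ℝ × ℝ → ℝ :=
  fun p => Kc p.1 p.2 * Real.exp (lam * vcl T p.1) * g p

lemma hh_meas (hme : Measurable (uncurry Kc)) (g : ℝ × ℝ →ᵇ ℝ) :
    Measurable (hh T lam Kc g) := by
  have h1 : Measurable fun p : ℝ × ℝ => Kc p.1 p.2 := hme
  have h2 : Continuous fun p : ℝ × ℝ => Real.exp (lam * vcl T p.1) :=
    Real.continuous_exp.comp (continuous_const.mul ((continuous_vcl T).comp continuous_fst))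
  exact (h1.mul h2.measurable).mul g.continuous.measurable

lemma hh_bound (hT : 0 ≤ T) (hlam : 0 ≤ lam) (hbd : ∀ s a, |Kc s a| ≤ C)
    (g : ℝ × ℝ →ᵇ ℝ) (p : ℝ × ℝ) :
    |hh T lam Kc g p| ≤ C * Real.exp (lam * T) * ‖g‖ := by
  have hC : 0 ≤ C := le_trans (abs_nonneg _) (hbd 0 0)
  have he : Real.exp (lam * vcl T p.1) ≤ Real.exp (lam * T) :=
    Real.exp_le_exp.2 (mul_le_mul_of_nonneg_left (vcl_le hT _) hlam)
  have hg : |g p| ≤ ‖g‖ := by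
    simpa [Real.norm_eq_abs] using g.norm_coe_le_norm p
  calc |hh T lam Kc g p| = |Kc p.1 p.2| * Real.exp (lam * vcl T p.1) * |g p| := by
        simp [hh, abs_mul, abs_of_nonneg (Real.exp_pos _).le]
    _ ≤ C * Real.exp (lam * T) * ‖g‖ := by
        apply mul_le_mul ?_ hg (abs_nonneg _) (by positivity)
        exact mul_le_mul (hbd _ _) he (Real.exp_pos _).le hC

lemma hh_sub_bound (hbd : ∀ s a, |Kc s a| ≤ C) (g₁ g₂ : ℝ × ℝ →ᵇ ℝ) (p : ℝ × ℝ) :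
    |hh T lam Kc g₁ p - hh T lam Kc g₂ p|
      ≤ C * Real.exp (lam * vcl T p.1) * dist g₁ g₂ := by
  have hd : |g₁ p - g₂ p| ≤ dist g₁ g₂ := by
    simpa [Real.dist_eq] using
      BoundedContinuousFunction.dist_coe_le_dist (f := g₁) (g := g₂) p
  calc |hh T lam Kc g₁ p - hh T lam Kc g₂ p|
      = |Kc p.1 p.2| * Real.exp (lam * vcl T p.1) * |g₁ p - g₂ p| := by
        simp [hh, ← mul_sub, abs_mul, abs_of_nonneg (Real.exp_pos _).le]
    _ ≤ C * Real.exp (lam * vcl T p.1) * dist g₁ g₂ := by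
        have hC : 0 ≤ C := le_trans (abs_nonneg _) (hbd 0 0)
        apply mul_le_mul ?_ hd (abs_nonneg _)
          (mul_nonneg hC (Real.exp_pos _).le)
        exact mul_le_mul_of_nonneg_right (hbd _ _) (Real.exp_pos _).le

noncomputable def FF (T X lam : ℝ) (Kc : ℝ → ℝ → ℝ) (g : ℝ × ℝ →ᵇ ℝ) : ℝ × ℝ → ℝ :=
  fun p => ∫ s in (0:ℝ)..vcl T p.1, ∫ a in (0:ℝ)..vcl X p.2, hh T lam Kc g (s, a)

noncomputable def raw (T X lam y₀ : ℝ) (Kc : ℝ → ℝ → ℝ) (g : ℝ × ℝ →ᵇ ℝ) : ℝ × ℝ → ℝ :=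
  fun p => Real.exp (-(lam * vcl T p.1)) * (y₀ + FF T X lam Kc g p)

lemma raw_cont (hT : 0 ≤ T) (hX : 0 ≤ X) (hlam : 0 ≤ lam)
    (hme : Measurable (uncurry Kc)) (hbd : ∀ s a, |Kc s a| ≤ C) (g : ℝ × ℝ →ᵇ ℝ) :
    Continuous (raw T X lam y₀ Kc g) := by
  have hC : 0 ≤ C := le_trans (abs_nonneg _) (hbd 0 0)
  have hM : 0 ≤ C * Real.exp (lam * T) * ‖g‖ := by positivity
  exact (Real.continuous_exp.comp
      ((continuous_const.mul ((continuous_vcl T).comp continuous_fst)).neg)).mul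
    (continuous_const.add (F_cont (hh_meas hme g) (hh_bound hT hlam hbd g) hT hX hM))

lemma raw_bound (hT : 0 ≤ T) (hX : 0 ≤ X) (hlam : 0 ≤ lam)
    (hbd : ∀ s a, |Kc s a| ≤ C) (g : ℝ × ℝ →ᵇ ℝ) (p : ℝ × ℝ) :
    ‖raw T X lam y₀ Kc g p‖ ≤ |y₀| + C * Real.exp (lam * T) * ‖g‖ * X * T := by
  have hC : 0 ≤ C := le_trans (abs_nonneg _) (hbd 0 0)
  have hM : 0 ≤ C * Real.exp (lam * T) * ‖g‖ := by positivity
  have he : Real.exp (-(lam * vcl T p.1)) ≤ 1 := by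
    rw [Real.exp_le_one_iff]
    simp only [neg_nonpos]
    exact mul_nonneg hlam (vcl_nonneg _ _)
  rw [Real.norm_eq_abs, raw, abs_mul, abs_of_nonneg (Real.exp_pos _).le]
  calc Real.exp (-(lam * vcl T p.1)) * |y₀ + FF T X lam Kc g p|
      ≤ 1 * (|y₀| + C * Real.exp (lam * T) * ‖g‖ * X * T) := by
        refine mul_le_mul he ((abs_add_le _ _).trans (add_le_add_right ?_ _)) (abs_nonneg _)
          zero_le_one
        exact F_bound (hh_bound hT hlam hbd g) hT hX hM p
    _ = _ := one_mul _

noncomputable def Phi (T X lam y₀ C : ℝ) (Kc : ℝ → ℝ → ℝ) (hT : 0 ≤ T) (hX : 0 ≤ X)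
    (hlam : 0 ≤ lam) (hme : Measurable (uncurry Kc)) (hbd : ∀ s a, |Kc s a| ≤ C)
    (g : ℝ × ℝ →ᵇ ℝ) : ℝ × ℝ →ᵇ ℝ :=
  BoundedContinuousFunction.ofNormedAddCommGroup (raw T X lam y₀ Kc g)
    (raw_cont hT hX hlam hme hbd g)
    (|y₀| + C * Real.exp (lam * T) * ‖g‖ * X * T)
    (raw_bound hT hX hlam hbd g)

lemma Phi_apply (T X lam y₀ C : ℝ) (Kc : ℝ → ℝ → ℝ) (hT : 0 ≤ T) (hX : 0 ≤ X)
    (hlam : 0 ≤ lam) (hme : Measurable (uncurry Kc)) (hbd : ∀ s a, |Kc s a| ≤ C)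
    (g : ℝ × ℝ →ᵇ ℝ) (p : ℝ × ℝ) :
    Phi T X lam y₀ C Kc hT hX hlam hme hbd g p = raw T X lam y₀ Kc g p := rfl

lemma Phi_dist (hT : 0 ≤ T) (hX : 0 ≤ X) (hlam : 0 < lam)
    (hme : Measurable (uncurry Kc)) (hbd : ∀ s a, |Kc s a| ≤ C)
    (g₁ g₂ : ℝ × ℝ →ᵇ ℝ) :
    dist (Phi T X lam y₀ C Kc hT hX hlam.le hme hbd g₁)
      (Phi T X lam y₀ C Kc hT hX hlam.le hme hbd g₂)
      ≤ (C * X / lam) * dist g₁ g₂ := by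
  have hC : 0 ≤ C := le_trans (abs_nonneg _) (hbd 0 0)
  set D := dist g₁ g₂ with hD
  have hD0 : 0 ≤ D := dist_nonneg
  rw [BoundedContinuousFunction.dist_le (mul_nonneg (div_nonneg (mul_nonneg hC hX) hlam.le) dist_nonneg)]
  intro p
  rw [Phi_apply, Phi_apply, Real.dist_eq]
  set d := vcl T p.1 with hd
  set c := vcl X p.2 with hc
  have hd0 : 0 ≤ d := vcl_nonneg T p.1
  have hdT : d ≤ T := vcl_le hT p.1
  have hc0 : 0 ≤ c := vcl_nonneg X p.2
  have hcX : c ≤ X := vcl_le hX p.2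
  -- the two FF's
  have hM₁ := hh_bound (C := C) hT hlam.le hbd g₁
  have hM₂ := hh_bound (C := C) hT hlam.le hbd g₂
  have hii₁ : IntervalIntegrable (fun s => ∫ a in (0:ℝ)..c, hh T lam Kc g₁ (s, a)) volume 0 d :=
    w_ii (hh_meas hme g₁) hM₁ hc0 _ _
  have hii₂ : IntervalIntegrable (fun s => ∫ a in (0:ℝ)..c, hh T lam Kc g₂ (s, a)) volume 0 d :=
    w_ii (hh_meas hme g₂) hM₂ hc0 _ _
  have hsub : raw T X lam y₀ Kc g₁ p - raw T X lam y₀ Kc g₂ p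
      = Real.exp (-(lam * d)) *
        ∫ s in (0:ℝ)..d, ((∫ a in (0:ℝ)..c, hh T lam Kc g₁ (s, a))
          - ∫ a in (0:ℝ)..c, hh T lam Kc g₂ (s, a)) := by
    rw [intervalIntegral.integral_sub hii₁ hii₂]
    simp only [raw, FF, ← hd, ← hc]
    ring
  rw [hsub, abs_mul, abs_of_nonneg (Real.exp_pos _).le]
  -- bound the integral
  have hptw : ∀ s ∈ Icc (0:ℝ) d,
      |(∫ a in (0:ℝ)..c, hh T lam Kc g₁ (s, a)) - ∫ a in (0:ℝ)..c, hh T lam Kc g₂ (s, a)|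
        ≤ C * X * D * Real.exp (lam * s) := by
    intro s hs
    have hcls : vcl T s = s := vcl_eq_self hs.1 (hs.2.trans hdT)
    rw [← intervalIntegral.integral_sub (inner_ii (hh_meas hme g₁) hM₁ s 0 c)
      (inner_ii (hh_meas hme g₂) hM₂ s 0 c)]
    have hbw : ∀ a ∈ uIoc (0:ℝ) c, ‖hh T lam Kc g₁ (s, a) - hh T lam Kc g₂ (s, a)‖
        ≤ C * Real.exp (lam * s) * D := by
      intro a _
      rw [Real.norm_eq_abs]
      have := hh_sub_bound (T := T) (lam := lam) hbd g₁ g₂ (s, a)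
      rwa [hcls] at this
    have := intervalIntegral.norm_integral_le_of_norm_le_const hbw
    rw [Real.norm_eq_abs] at this
    refine this.trans ?_
    rw [sub_zero, abs_of_nonneg hc0]
    calc C * Real.exp (lam * s) * D * c ≤ C * Real.exp (lam * s) * D * X := by
          exact mul_le_mul_of_nonneg_left hcX (by positivity)
      _ = C * X * D * Real.exp (lam * s) := by ring
  have hdiff_ii : IntervalIntegrable
      (fun s => (∫ a in (0:ℝ)..c, hh T lam Kc g₁ (s, a))
        - ∫ a in (0:ℝ)..c, hh T lam Kc g₂ (s, a)) volume 0 d := hii₁.sub hii₂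
  have habs : |∫ s in (0:ℝ)..d, ((∫ a in (0:ℝ)..c, hh T lam Kc g₁ (s, a))
      - ∫ a in (0:ℝ)..c, hh T lam Kc g₂ (s, a))|
      ≤ ∫ s in (0:ℝ)..d, C * X * D * Real.exp (lam * s) := by
    refine (intervalIntegral.abs_integral_le_integral_abs hd0).trans ?_
    refine intervalIntegral.integral_mono_on hd0 hdiff_ii.abs ?_ ?_
    · exact (Continuous.intervalIntegrable (by continuity) 0 d)
    · exact hptw
  have hexp : (∫ s in (0:ℝ)..d, C * X * D * Real.exp (lam * s))
      = C * X * D * ((Real.exp (lam * d) - 1) / lam) := by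
    rw [intervalIntegral.integral_const_mul, integral_exp_mul hlam]
  calc Real.exp (-(lam * d)) * |∫ s in (0:ℝ)..d, _|
      ≤ Real.exp (-(lam * d)) * (C * X * D * ((Real.exp (lam * d) - 1) / lam)) := by
        refine mul_le_mul_of_nonneg_left ?_ (Real.exp_pos _).le
        rw [← hexp]; exact habs
    _ ≤ (C * X * D) / lam := exp_discount hlam _ (by positivity)
    _ = (C * X / lam) * D := by ring

end VolterraAux
/-- For bounded measurable `K` on `[0,T] × [0,X]` and `y₀ ∈ ℝ`, there exists a
unique continuous function `m` on `[0,T] × [0,X]` satisfying the two-parameter linear Volterra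
integral equation `m(t,x) = y₀ + ∫₀ᵗ ∫₀ˣ K(s,a) m(s,a) da ds`. -/
theorem volterra_existence_uniqueness (T X : ℝ) (hT : 0 < T) (hX : 0 < X)
    (K : ℝ → ℝ → ℝ) (hKmeas : Measurable (Function.uncurry K))
    (hKbdd : ∃ C : ℝ, ∀ s ∈ Icc (0 : ℝ) T, ∀ a ∈ Icc (0 : ℝ) X, |K s a| ≤ C)
    (y₀ : ℝ) :
    ∃ m : ℝ → ℝ → ℝ,
      (ContinuousOn (fun p : ℝ × ℝ => m p.1 p.2) (Icc 0 T ×ˢ Icc 0 X) ∧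
        ∀ t ∈ Icc (0 : ℝ) T, ∀ x ∈ Icc (0 : ℝ) X,
          m t x = y₀ + ∫ s in (0 : ℝ)..t, ∫ a in (0 : ℝ)..x, K s a * m s a) ∧
      ∀ m' : ℝ → ℝ → ℝ,
        (ContinuousOn (fun p : ℝ × ℝ => m' p.1 p.2) (Icc 0 T ×ˢ Icc 0 X) ∧
          ∀ t ∈ Icc (0 : ℝ) T, ∀ x ∈ Icc (0 : ℝ) X,
            m' t x = y₀ + ∫ s in (0 : ℝ)..t, ∫ a in (0 : ℝ)..x, K s a * m' s a) →
        ∀ t ∈ Icc (0 : ℝ) T, ∀ x ∈ Icc (0 : ℝ) X, m' t x = m t x := by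
  classical
  obtain ⟨C, hC⟩ := hKbdd
  have h00T : (0:ℝ) ∈ Icc (0:ℝ) T := ⟨le_refl _, hT.le⟩
  have h00X : (0:ℝ) ∈ Icc (0:ℝ) X := ⟨le_refl _, hX.le⟩
  have hC0 : 0 ≤ C := le_trans (abs_nonneg _) (hC 0 h00T 0 h00X)
  set Kc : ℝ → ℝ → ℝ := fun s a => K (vcl T s) (vcl X a) with hKcdef
  have hme : Measurable (Function.uncurry Kc) := by
    have heq : Function.uncurry Kc
        = Function.uncurry K ∘ fun p : ℝ × ℝ => (vcl T p.1, vcl X p.2) := rfl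
    rw [heq]
    exact hKmeas.comp (((measurable_vcl T).comp measurable_fst).prodMk
      ((measurable_vcl X).comp measurable_snd))
  have hbd : ∀ s a, |Kc s a| ≤ C := fun s a =>
    hC _ (vcl_mem hT.le s) _ (vcl_mem hX.le a)
  have hKcK : ∀ s ∈ Icc (0:ℝ) T, ∀ a ∈ Icc (0:ℝ) X, Kc s a = K s a := by
    intro s hs a ha
    simp only [hKcdef, vcl_eq_self hs.1 hs.2, vcl_eq_self ha.1 ha.2]
  set lam : ℝ := C * X + 1 with hlamdef
  have hlam : 0 < lam := by positivity
  set Φ := Phi T X lam y₀ C Kc hT.le hX.le hlam.le hme hbd with hΦdef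
  have hq : (0:ℝ) ≤ C * X / lam := div_nonneg (mul_nonneg hC0 hX.le) hlam.le
  have hcontr : ContractingWith (Real.toNNReal (C * X / lam)) Φ := by
    constructor
    · rw [← NNReal.coe_lt_coe, Real.coe_toNNReal _ hq, NNReal.coe_one, div_lt_one hlam]
      linarith
    · refine LipschitzWith.of_dist_le_mul fun g₁ g₂ => ?_
      rw [Real.coe_toNNReal _ hq]
      exact Phi_dist hT.le hX.le hlam hme hbd g₁ g₂
  set g := ContractingWith.fixedPoint Φ hcontr with hgdef
  have hfix : Φ g = g := ContractingWith.fixedPoint_isFixedPt hcontr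
  refine ⟨fun t x => Real.exp (lam * vcl T t) * g (t, x), ⟨?_, ?_⟩, ?_⟩
  · refine Continuous.continuousOn ?_
    exact (Real.continuous_exp.comp
      (continuous_const.mul ((continuous_vcl T).comp continuous_fst))).mul g.continuous
  · intro t ht x hx
    have hclt : vcl T t = t := vcl_eq_self ht.1 ht.2
    have hclx : vcl X x = x := vcl_eq_self hx.1 hx.2
    show Real.exp (lam * vcl T t) * g (t, x)
        = y₀ + ∫ s in (0:ℝ)..t, ∫ a in (0:ℝ)..x,
            K s a * (Real.exp (lam * vcl T s) * g (s, a))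
    have e1 : g (t, x) = raw T X lam y₀ Kc g (t, x) := by
      conv_lhs => rw [← hfix]
      rfl
    have e2 : Real.exp (lam * vcl T t) * g (t, x) = y₀ + FF T X lam Kc g (t, x) := by
      rw [e1]
      simp only [raw]
      rw [← mul_assoc, ← Real.exp_add, add_neg_cancel, Real.exp_zero, one_mul]
    rw [e2]
    congr 1
    simp only [FF, hclt, hclx]
    refine intervalIntegral.integral_congr fun s hs => ?_
    rw [uIcc_of_le ht.1] at hs
    refine intervalIntegral.integral_congr fun a ha => ?_
    rw [uIcc_of_le hx.1] at ha
    have hsT : s ∈ Icc (0:ℝ) T := ⟨hs.1, hs.2.trans ht.2⟩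
    have haX : a ∈ Icc (0:ℝ) X := ⟨ha.1, ha.2.trans hx.2⟩
    simp only [hh]
    rw [hKcK s hsT a haX]
    ring
  · rintro m' ⟨hm'c, hm'eq⟩ t ht x hx
    obtain ⟨B, hB⟩ := (isCompact_Icc.prod isCompact_Icc).exists_bound_of_continuousOn hm'c
    have hg'cont : Continuous fun p : ℝ × ℝ =>
        Real.exp (-(lam * vcl T p.1)) * m' (vcl T p.1) (vcl X p.2) := by
      refine (Real.continuous_exp.comp
        ((continuous_const.mul ((continuous_vcl T).comp continuous_fst)).neg)).mul ?_
      exact hm'c.comp_continuous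
        (((continuous_vcl T).comp continuous_fst).prodMk
          ((continuous_vcl X).comp continuous_snd))
        (fun p => ⟨vcl_mem hT.le _, vcl_mem hX.le _⟩)
    have hg'bd : ∀ p : ℝ × ℝ,
        ‖Real.exp (-(lam * vcl T p.1)) * m' (vcl T p.1) (vcl X p.2)‖ ≤ B := by
      intro p
      have hBp : ‖m' (vcl T p.1) (vcl X p.2)‖ ≤ B :=
        hB (vcl T p.1, vcl X p.2) ⟨vcl_mem hT.le _, vcl_mem hX.le _⟩
      have hexp : Real.exp (-(lam * vcl T p.1)) ≤ 1 := by
        rw [Real.exp_le_one_iff, neg_nonpos]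
        exact mul_nonneg hlam.le (vcl_nonneg _ _)
      rw [norm_mul]
      calc ‖Real.exp (-(lam * vcl T p.1))‖ * ‖m' (vcl T p.1) (vcl X p.2)‖
          ≤ 1 * B := by
            refine mul_le_mul ?_ hBp (norm_nonneg _) zero_le_one
            rw [Real.norm_eq_abs, abs_of_nonneg (Real.exp_pos _).le]; exact hexp
        _ = B := one_mul B
    set g' : BoundedContinuousFunction (ℝ × ℝ) ℝ := BoundedContinuousFunction.ofNormedAddCommGroup _ hg'cont B hg'bd
      with hg'def
    have hg'app : ∀ p : ℝ × ℝ,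
        g' p = Real.exp (-(lam * vcl T p.1)) * m' (vcl T p.1) (vcl X p.2) := fun p => rfl
    have hfix' : Function.IsFixedPt Φ g' := by
      apply BoundedContinuousFunction.ext
      intro p
      rw [hg'app p]
      show raw T X lam y₀ Kc g' p = _
      simp only [raw]
      congr 1
      rw [hm'eq (vcl T p.1) (vcl_mem hT.le _) (vcl X p.2) (vcl_mem hX.le _)]
      congr 1
      simp only [FF]
      refine intervalIntegral.integral_congr fun s hs => ?_
      rw [uIcc_of_le (vcl_nonneg T p.1)] at hs
      refine intervalIntegral.integral_congr fun a ha => ?_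
      rw [uIcc_of_le (vcl_nonneg X p.2)] at ha
      have hsT : s ∈ Icc (0:ℝ) T := ⟨hs.1, hs.2.trans (vcl_le hT.le _)⟩
      have haX : a ∈ Icc (0:ℝ) X := ⟨ha.1, ha.2.trans (vcl_le hX.le _)⟩
      simp only [hh]
      rw [hg'app (s, a)]
      show Kc s a * Real.exp (lam * vcl T s)
          * (Real.exp (-(lam * vcl T s)) * m' (vcl T s) (vcl X a)) = K s a * m' s a
      rw [hKcK s hsT a haX, vcl_eq_self hsT.1 hsT.2, vcl_eq_self haX.1 haX.2]
      have hee : Real.exp (lam * s) * Real.exp (-(lam * s)) = 1 := by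
        rw [← Real.exp_add, add_neg_cancel, Real.exp_zero]
      rw [mul_assoc, ← mul_assoc (Real.exp (lam * s)), hee, one_mul]
    have hg'g : g' = g := ContractingWith.fixedPoint_unique' hcontr hfix' hfix
    have hpt : g' (t, x) = g (t, x) := by rw [hg'g]
    have hm'val : m' t x = Real.exp (lam * vcl T t) * g' (t, x) := by
      rw [hg'app (t, x)]
      show m' t x = Real.exp (lam * vcl T t)
        * (Real.exp (-(lam * vcl T t)) * m' (vcl T t) (vcl X x))
      rw [← mul_assoc, ← Real.exp_add, add_neg_cancel, Real.exp_zero, one_mul,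
        vcl_eq_self ht.1 ht.2, vcl_eq_self hx.1 hx.2]
    show m' t x = Real.exp (lam * vcl T t) * g (t, x)
    rw [hm'val, hpt]
end

section
/- Let Hₙ denote the n-th probabilists' Hermite polynomial. For every real η ≠ 0 and every y₀ > 0, the series b(u) := y₀ ∑_{n≥0} ((−η)ⁿ/(n!)²) Hₙ(u) converges for every u ∈ ℝ, and the resulting function b : ℝ → ℝ is not non-negative: there exists u ∈ ℝ with b(u) < 0. -/
open Polynomial Real MeasureTheory Filter Nat

lemma herm_coeff_bound (n k : ℕ) : |(((hermite n).coeff k : ℤ) : ℝ)| ≤ (n ! : ℝ) := by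
  have h : ((hermite n).coeff k).natAbs ≤ n ! := by
    rw [coeff_hermite]
    split_ifs with h
    · rcases le_or_gt k n with hk | hk
      · have h1 : (n - k - 1)‼ ≤ (n - k)! :=
          le_trans (Nat.doubleFactorial_le_factorial _) (Nat.factorial_le (by omega))
        have h2 : n.choose k * k ! * (n - k)! = n ! := Nat.choose_mul_factorial_mul_factorial hk
        calc ((-1 : ℤ) ^ ((n - k) / 2) * (n - k - 1)‼ * n.choose k).natAbs
            = (n - k - 1)‼ * n.choose k := by
              simp [Int.natAbs_mul, Int.natAbs_pow]
          _ ≤ (n - k)! * n.choose k := Nat.mul_le_mul_right _ h1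
          _ ≤ n ! := by
              calc (n-k)! * n.choose k ≤ (n.choose k * k !) * (n - k)! := by
                    have : 1 ≤ k ! := Nat.one_le_iff_ne_zero.mpr (Nat.factorial_ne_zero k)
                    nlinarith [Nat.zero_le (n.choose k), Nat.zero_le ((n-k)!)]
                _ = n ! := h2
      · simp [Nat.choose_eq_zero_of_lt hk]
    · simp
  rw [← Int.cast_abs, Int.abs_eq_natAbs]
  exact_mod_cast h

lemma herm_eval_bound (n : ℕ) (u : ℝ) :
    |(aeval u (hermite n) : ℝ)| ≤ ((n:ℝ) + 1) * n ! * (max 1 |u|) ^ n := by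
  have hM : (1:ℝ) ≤ max 1 |u| := le_max_left _ _
  rw [aeval_eq_sum_range]
  calc |∑ i ∈ Finset.range ((hermite n).natDegree + 1), (hermite n).coeff i • u ^ i|
      ≤ ∑ i ∈ Finset.range ((hermite n).natDegree + 1), |(hermite n).coeff i • u ^ i| :=
        Finset.abs_sum_le_sum_abs _ _
    _ ≤ ∑ i ∈ Finset.range ((hermite n).natDegree + 1), (n ! : ℝ) * (max 1 |u|) ^ n := by
        apply Finset.sum_le_sum
        intro i hi
        have hi' : i ≤ n := by
          have := Finset.mem_range.mp hi
          simpa [natDegree_hermite] using Nat.lt_succ_iff.mp this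
        have : |(hermite n).coeff i • u ^ i| = |(((hermite n).coeff i : ℤ) : ℝ)| * |u| ^ i := by
          rw [zsmul_eq_mul, abs_mul, abs_pow]
        rw [this]
        apply mul_le_mul (herm_coeff_bound n i) ?_ (by positivity) (by positivity)
        calc |u| ^ i ≤ (max 1 |u|) ^ i := pow_le_pow_left₀ (abs_nonneg u) (le_max_right _ _) i
          _ ≤ (max 1 |u|) ^ n := pow_le_pow_right₀ hM hi'
    _ = ((n:ℝ) + 1) * n ! * (max 1 |u|) ^ n := by
        rw [Finset.sum_const, Finset.card_range, natDegree_hermite]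
        push_cast; ring

lemma summable_aux1 (x : ℝ) (hx : 0 ≤ x) : Summable (fun n : ℕ => ((n:ℝ)+1) * x ^ n / n !) := by
  have h := Real.summable_pow_div_factorial (2*x)
  refine Summable.of_nonneg_of_le (fun n => by positivity) (fun n => ?_) h
  have h2 : ((n:ℝ)+1) ≤ 2 ^ n := by exact_mod_cast Nat.lt_two_pow_self (n := n)
  calc ((n:ℝ)+1) * x ^ n / n ! ≤ 2 ^ n * x ^ n / n ! := by gcongr
    _ = (2*x) ^ n / n ! := by rw [mul_pow]

lemma summable_aux2 (B : ℝ) (hB : 0 ≤ B) :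
    Summable (fun n : ℕ => B ^ n / Real.sqrt (n !)) := by
  rcases eq_or_lt_of_le hB with rfl | hB'
  · have : (fun n : ℕ => (0:ℝ) ^ n / Real.sqrt (n !)) = fun n : ℕ => if n = 0 then 1 else 0 := by
      funext n
      cases n with
      | zero => simp
      | succ m => simp [zero_pow]
    rw [this]
    exact summable_of_ne_finset_zero (s := {0}) (by intro n hn; simp at hn; simp [hn])
  · apply summable_of_ratio_norm_eventually_le (r := 1/2) (by norm_num)
    filter_upwards [Filter.eventually_ge_atTop (⌈(2*B)^2⌉₊)] with n hn
    have hfac : (0:ℝ) < n ! := by positivity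
    have hs : (0:ℝ) < Real.sqrt (n !) := Real.sqrt_pos.mpr hfac
    have key : Real.sqrt (((n+1)! : ℕ)) = Real.sqrt ((n:ℝ)+1) * Real.sqrt (n !) := by
      rw [← Real.sqrt_mul (by positivity)]
      congr 1
      rw [Nat.factorial_succ]
      push_cast; ring
    have hB2 : 2 * B ≤ Real.sqrt ((n:ℝ)+1) := by
      rw [Real.le_sqrt (by positivity) (by positivity)]
      have : ((2*B)^2 : ℝ) ≤ (⌈(2*B)^2⌉₊ : ℝ) := Nat.le_ceil _
      have h2 : ((⌈(2*B)^2⌉₊ : ℕ) : ℝ) ≤ (n : ℝ) := by exact_mod_cast hn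
      linarith
    have hs1 : (0:ℝ) < Real.sqrt ((n:ℝ)+1) := by positivity
    rw [Real.norm_of_nonneg (by positivity), Real.norm_of_nonneg (by positivity), key]
    rw [div_le_iff₀ (by positivity)]
    have expand : B ^ (n+1) = B * B ^ n := by ring
    rw [expand]
    have : 1 / 2 * (B ^ n / Real.sqrt (n !)) * (Real.sqrt ((n:ℝ)+1) * Real.sqrt (n !))
        = (Real.sqrt ((n:ℝ)+1) / 2) * B ^ n := by
      field_simp
    rw [this]
    have hfin : B ≤ Real.sqrt ((n:ℝ)+1) / 2 := by linarith
    exact mul_le_mul_of_nonneg_right hfin (by positivity)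

-- |t|^i ≤ 2^i √(i!) e^{t²/8}
lemma abs_pow_le_aux (i : ℕ) (t : ℝ) :
    |t| ^ i ≤ 2 ^ i * Real.sqrt (i !) * Real.exp (t ^ 2 / 8) := by
  have hx : (0:ℝ) ≤ t ^ 2 / 4 := by positivity
  have h1 : (t ^ 2 / 4) ^ i / i ! ≤ Real.exp (t ^ 2 / 4) := by
    calc (t ^ 2 / 4) ^ i / i ! ≤ ∑ j ∈ Finset.range (i+1), (t ^ 2 / 4) ^ j / j ! := by
          apply Finset.single_le_sum (f := fun j => (t ^ 2 / 4) ^ j / (j ! : ℝ))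
            (fun j _ => by positivity) (Finset.self_mem_range_succ i)
      _ ≤ Real.exp (t ^ 2 / 4) := Real.sum_le_exp_of_nonneg hx _
  have h2 : (|t| ^ i) ^ 2 ≤ 4 ^ i * i ! * Real.exp (t ^ 2 / 4) := by
    have hfac : (0:ℝ) < i ! := by positivity
    have := (div_le_iff₀ hfac).mp h1
    calc (|t| ^ i) ^ 2 = (t ^ 2) ^ i := by rw [← pow_mul, mul_comm, pow_mul, sq_abs]
      _ = 4 ^ i * (t ^ 2 / 4) ^ i := by
          rw [div_pow, mul_div_cancel₀ _ (by positivity : ((4:ℝ) ^ i) ≠ 0)]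
      _ ≤ 4 ^ i * (Real.exp (t ^ 2 / 4) * i !) := by gcongr
      _ = 4 ^ i * i ! * Real.exp (t ^ 2 / 4) := by ring
  have h3 : |t| ^ i = Real.sqrt ((|t| ^ i) ^ 2) := (Real.sqrt_sq (by positivity)).symm
  rw [h3]
  calc Real.sqrt ((|t| ^ i) ^ 2) ≤ Real.sqrt (4 ^ i * i ! * Real.exp (t ^ 2 / 4)) :=
        Real.sqrt_le_sqrt h2
    _ = 2 ^ i * Real.sqrt (i !) * Real.exp (t ^ 2 / 8) := by
        rw [Real.sqrt_mul (by positivity), Real.sqrt_mul (by positivity), ← Real.exp_half]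
        congr 1
        · congr 1
          rw [show (4:ℝ) ^ i = ((2:ℝ) ^ i) ^ 2 by
            rw [show (4:ℝ) = 2 ^ 2 by norm_num, ← pow_mul, ← pow_mul, mul_comm]]
          exact Real.sqrt_sq (by positivity)
        · congr 1; ring

noncomputable def polyC (P : ℝ[X]) : ℝ :=
  ∑ i ∈ Finset.range (P.natDegree + 1), |P.coeff i| * (2 ^ i * Real.sqrt (i !))

lemma polyC_nonneg (P : ℝ[X]) : 0 ≤ polyC P := by
  apply Finset.sum_nonneg; intro i _; positivity

lemma poly_abs_bound (P : ℝ[X]) (u : ℝ) :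
    |P.eval u| ≤ polyC P * Real.exp (u ^ 2 / 8) := by
  rw [eval_eq_sum_range, polyC, Finset.sum_mul]
  calc |∑ i ∈ Finset.range (P.natDegree + 1), P.coeff i * u ^ i|
      ≤ ∑ i ∈ Finset.range (P.natDegree + 1), |P.coeff i * u ^ i| :=
        Finset.abs_sum_le_sum_abs _ _
    _ ≤ ∑ i ∈ Finset.range (P.natDegree + 1),
          |P.coeff i| * (2 ^ i * Real.sqrt (i !)) * Real.exp (u ^ 2 / 8) := by
        apply Finset.sum_le_sum
        intro i _
        rw [abs_mul, abs_pow, mul_assoc, mul_assoc]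
        exact mul_le_mul_of_nonneg_left
          (by simpa [mul_assoc] using abs_pow_le_aux i u) (abs_nonneg _)

lemma poly_gauss_norm_bound (P : ℝ[X]) (s u : ℝ) :
    ‖P.eval u * Real.exp (s * u - u ^ 2 / 2)‖
      ≤ polyC P * Real.exp (s ^ 2) * Real.exp (-(1/8) * u ^ 2) := by
  have hexp : Real.exp (s * u - u ^ 2 / 2) ≤ Real.exp (s ^ 2) * Real.exp (-(1/4) * u ^ 2) := by
    rw [← Real.exp_add]
    apply Real.exp_le_exp.mpr
    nlinarith [sq_nonneg (s - u / 2)]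
  rw [Real.norm_eq_abs, abs_mul, abs_of_pos (Real.exp_pos _)]
  calc |P.eval u| * Real.exp (s * u - u ^ 2 / 2)
      ≤ (polyC P * Real.exp (u ^ 2 / 8)) * (Real.exp (s ^ 2) * Real.exp (-(1/4) * u ^ 2)) := by
        apply mul_le_mul (poly_abs_bound P u) hexp (le_of_lt (Real.exp_pos _)) (mul_nonneg (polyC_nonneg P) (Real.exp_pos _).le)
    _ = polyC P * Real.exp (s ^ 2) * (Real.exp (u ^ 2 / 8) * Real.exp (-(1/4) * u ^ 2)) := by ring
    _ = polyC P * Real.exp (s ^ 2) * Real.exp (-(1/8) * u ^ 2) := by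
        rw [← Real.exp_add]; congr 1; ring

lemma integrable_poly_gauss (P : ℝ[X]) (s : ℝ) :
    Integrable (fun u : ℝ => P.eval u * Real.exp (s * u - u ^ 2 / 2)) := by
  have hmeas : AEStronglyMeasurable (fun u : ℝ => P.eval u * Real.exp (s * u - u ^ 2 / 2)) volume := by
    apply Continuous.aestronglyMeasurable
    exact (Polynomial.continuous P).mul (Real.continuous_exp.comp (by fun_prop))
  apply Integrable.mono' (((integrable_exp_neg_mul_sq (by norm_num : (0:ℝ) < 1/8)).const_mul
    (polyC P * Real.exp (s ^ 2)))) hmeas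
  filter_upwards with u
  simpa [mul_assoc] using poly_gauss_norm_bound P s u

lemma tendsto_poly_gauss_atTop (P : ℝ[X]) (s : ℝ) :
    Tendsto (fun u : ℝ => P.eval u * Real.exp (s * u - u ^ 2 / 2)) atTop (nhds 0) := by
  apply squeeze_zero_norm (fun u => poly_gauss_norm_bound P s u)
  have h1 : Tendsto (fun u : ℝ => -(1/8) * u ^ 2) atTop atBot := by
    apply Tendsto.const_mul_atTop_of_neg (by norm_num : (-(1/8) : ℝ) < 0)
    exact tendsto_pow_atTop (by norm_num : 2 ≠ 0)
  have h2 : Tendsto (fun u : ℝ => Real.exp (-(1/8) * u ^ 2)) atTop (nhds 0) :=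
    Real.tendsto_exp_atBot.comp h1
  simpa using h2.const_mul (polyC P * Real.exp (s ^ 2))

lemma tendsto_poly_gauss_atBot (P : ℝ[X]) (s : ℝ) :
    Tendsto (fun u : ℝ => P.eval u * Real.exp (s * u - u ^ 2 / 2)) atBot (nhds 0) := by
  apply squeeze_zero_norm (fun u => poly_gauss_norm_bound P s u)
  have h1 : Tendsto (fun u : ℝ => -(1/8) * u ^ 2) atBot atBot := by
    have h0 : Tendsto (fun u : ℝ => u ^ 2) atBot atTop := by
      rw [show (fun u : ℝ => u ^ 2) = (fun v : ℝ => v ^ 2) ∘ (fun u : ℝ => -u) from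
        funext fun u => by simp]
      exact (tendsto_pow_atTop (by norm_num : 2 ≠ 0)).comp tendsto_neg_atBot_atTop
    exact Tendsto.const_mul_atTop_of_neg (by norm_num : (-(1/8) : ℝ) < 0) h0
  have h2 : Tendsto (fun u : ℝ => Real.exp (-(1/8) * u ^ 2)) atBot (nhds 0) :=
    Real.tendsto_exp_atBot.comp h1
  simpa using h2.const_mul (polyC P * Real.exp (s ^ 2))

lemma hasDerivAt_poly_gauss (P : ℝ[X]) (s u : ℝ) :
    HasDerivAt (fun u : ℝ => P.eval u * Real.exp (s * u - u ^ 2 / 2))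
      ((P.derivative + (C s - X) * P).eval u * Real.exp (s * u - u ^ 2 / 2)) u := by
  have h1 : HasDerivAt (fun u : ℝ => P.eval u) (P.derivative.eval u) u := P.hasDerivAt u
  have h2 : HasDerivAt (fun u : ℝ => s * u - u ^ 2 / 2) (s - u) u := by
    have ha : HasDerivAt (fun u : ℝ => s * u) s u := by
      simpa using (hasDerivAt_id u).const_mul s
    have hb : HasDerivAt (fun u : ℝ => u ^ 2 / 2) u u := by
      have := (hasDerivAt_pow 2 u).div_const 2
      simpa using this
    exact ha.sub hb
  have h3 : HasDerivAt (fun u : ℝ => Real.exp (s * u - u ^ 2 / 2))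
      (Real.exp (s * u - u ^ 2 / 2) * (s - u)) u := h2.exp
  have : HasDerivAt (fun u : ℝ => P.eval u * Real.exp (s * u - u ^ 2 / 2)) _ u := h1.mul h3
  convert this using 1
  simp [eval_add, eval_mul, eval_sub]
  ring

lemma integral_deriv_poly_gauss (P : ℝ[X]) (s : ℝ) :
    ∫ u : ℝ, (P.derivative + (C s - X) * P).eval u * Real.exp (s * u - u ^ 2 / 2) = 0 := by
  set g := fun u : ℝ => P.eval u * Real.exp (s * u - u ^ 2 / 2) with hg
  set g' := fun u : ℝ => (P.derivative + (C s - X) * P).eval u * Real.exp (s * u - u ^ 2 / 2)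
  have hint : Integrable g' := integrable_poly_gauss _ s
  have hderiv : ∀ x : ℝ, HasDerivAt g (g' x) x := fun x => hasDerivAt_poly_gauss P s x
  have htop : Tendsto g atTop (nhds 0) := tendsto_poly_gauss_atTop P s
  have hbot : Tendsto g atBot (nhds 0) := tendsto_poly_gauss_atBot P s
  have hIoi : ∫ u in Set.Ioi (0:ℝ), g' u = 0 - g 0 :=
    integral_Ioi_of_hasDerivAt_of_tendsto ((hderiv 0).continuousAt.continuousWithinAt)
      (fun x _ => hderiv x) hint.integrableOn htop
  have hIic : ∫ u in Set.Iic (0:ℝ), g' u = g 0 - 0 :=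
    integral_Iic_of_hasDerivAt_of_tendsto ((hderiv 0).continuousAt.continuousWithinAt)
      (fun x _ => hderiv x) hint.integrableOn hbot
  rw [← intervalIntegral.integral_Iic_add_Ioi (b := (0:ℝ)) hint.integrableOn hint.integrableOn, hIoi, hIic]
  ring

lemma integral_gauss_affine (s : ℝ) :
    ∫ u : ℝ, Real.exp (s * u - u ^ 2 / 2) = Real.sqrt (2 * π) * Real.exp (s ^ 2 / 2) := by
  have key : ∀ u : ℝ, Real.exp (s * u - u ^ 2 / 2)
      = Real.exp (s ^ 2 / 2) * Real.exp (-(1/2) * (u - s) ^ 2) := by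
    intro u; rw [← Real.exp_add]; congr 1; ring
  simp_rw [key]
  rw [integral_const_mul]
  have : ∫ u : ℝ, Real.exp (-(1/2) * (u - s) ^ 2) = ∫ u : ℝ, Real.exp (-(1/2) * u ^ 2) :=
    integral_sub_right_eq_self (fun u => Real.exp (-(1/2) * u ^ 2)) s
  rw [this, integral_gaussian]
  rw [show π / (1/2) = 2 * π by ring]
  ring

noncomputable def Ph (n : ℕ) : ℝ[X] := (hermite n).map (Int.castRingHom ℝ)

lemma aeval_hermite_eq (n : ℕ) (u : ℝ) : (aeval u (hermite n) : ℝ) = (Ph n).eval u := by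
  rw [Ph, aeval_def, eval_map, algebraMap_int_eq]

lemma integral_hermite_gauss (n : ℕ) (s : ℝ) :
    ∫ u : ℝ, (Ph n).eval u * Real.exp (s * u - u ^ 2 / 2)
      = s ^ n * (Real.sqrt (2 * π) * Real.exp (s ^ 2 / 2)) := by
  induction n with
  | zero =>
    have : Ph 0 = 1 := by rw [Ph, hermite_zero]; simp
    simp [this, integral_gauss_affine s]
  | succ n ih =>
    have hrec : Ph (n + 1) = X * Ph n - (Ph n).derivative := by
      rw [Ph, hermite_succ, Polynomial.map_sub, Polynomial.map_mul, map_X,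
        ← derivative_map, Ph]
    have h1 : Integrable (fun u : ℝ => (Ph n).eval u * Real.exp (s * u - u ^ 2 / 2)) :=
      integrable_poly_gauss _ s
    have h2 : Integrable (fun u : ℝ =>
        ((Ph n).derivative + (C s - X) * Ph n).eval u * Real.exp (s * u - u ^ 2 / 2)) :=
      integrable_poly_gauss _ s
    have key : ∀ u : ℝ, (Ph (n + 1)).eval u * Real.exp (s * u - u ^ 2 / 2)
        = s * ((Ph n).eval u * Real.exp (s * u - u ^ 2 / 2))
          - ((Ph n).derivative + (C s - X) * Ph n).eval u * Real.exp (s * u - u ^ 2 / 2) := by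
      intro u
      rw [hrec]
      simp only [eval_sub, eval_mul, eval_add, eval_X, eval_C]
      ring
    calc ∫ u : ℝ, (Ph (n + 1)).eval u * Real.exp (s * u - u ^ 2 / 2)
        = ∫ u : ℝ, (s * ((Ph n).eval u * Real.exp (s * u - u ^ 2 / 2))
            - ((Ph n).derivative + (C s - X) * Ph n).eval u * Real.exp (s * u - u ^ 2 / 2)) := by
          simp_rw [key]
      _ = s * (∫ u : ℝ, (Ph n).eval u * Real.exp (s * u - u ^ 2 / 2))
            - ∫ u : ℝ, ((Ph n).derivative + (C s - X) * Ph n).eval u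
              * Real.exp (s * u - u ^ 2 / 2) := by
          rw [integral_sub (h1.const_mul s) h2, integral_const_mul]
      _ = s ^ (n + 1) * (Real.sqrt (2 * π) * Real.exp (s ^ 2 / 2)) := by
          rw [ih, integral_deriv_poly_gauss]
          ring

lemma numeric_tail_bound (n : ℕ) :
    (9/4 : ℝ) ^ (n + 4) / (((n + 4)! : ℝ)) ^ 2 ≤ (729/16384) * (9/100) ^ n := by
  induction n with
  | zero => norm_num [Nat.factorial]
  | succ m ih =>
    have hfac : ((m + 5)! : ℝ) = ((m:ℝ) + 5) * ((m + 4)! : ℝ) := by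
      rw [show m + 5 = (m + 4) + 1 by ring, Nat.factorial_succ]
      push_cast; ring
    have hpos : (0:ℝ) < ((m + 4)! : ℝ) := by positivity
    have h25 : (25:ℝ) ≤ ((m:ℝ) + 5) ^ 2 := by nlinarith [Nat.cast_nonneg (α := ℝ) m]
    have key : (9/4 : ℝ) ^ (m + 1 + 4) / (((m + 1 + 4)! : ℝ)) ^ 2
        = ((9/4 : ℝ) ^ (m + 4) / (((m + 4)! : ℝ)) ^ 2) * ((9/4) / ((m:ℝ) + 5) ^ 2) := by
      rw [show m + 1 + 4 = m + 5 by ring, hfac, pow_succ]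
      field_simp
    rw [key]
    have hstep : (9/4 : ℝ) / ((m:ℝ) + 5) ^ 2 ≤ 9/100 := by
      rw [div_le_iff₀ (by nlinarith)]
      nlinarith
    calc ((9/4 : ℝ) ^ (m + 4) / (((m + 4)! : ℝ)) ^ 2) * ((9/4) / ((m:ℝ) + 5) ^ 2)
        ≤ ((729/16384) * (9/100) ^ m) * (9/100) := by
          apply mul_le_mul ih hstep (by positivity) (by positivity)
      _ = (729/16384) * (9/100) ^ (m + 1) := by ring

lemma numeric_summable : Summable (fun n : ℕ => (-9/4 : ℝ) ^ n / ((n ! : ℝ)) ^ 2) := by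
  apply Summable.of_norm_bounded (g := fun n : ℕ => (9/4 : ℝ) ^ n / (n ! : ℝ))
    (Real.summable_pow_div_factorial (9/4))
  intro n
  have h1 : (1:ℝ) ≤ (n ! : ℝ) := by exact_mod_cast Nat.one_le_iff_ne_zero.mpr (Nat.factorial_ne_zero n)
  rw [Real.norm_eq_abs, abs_div, abs_pow]
  have : |(-9/4 : ℝ)| = 9/4 := by norm_num
  rw [this, abs_pow, abs_of_nonneg (Nat.cast_nonneg _)]
  apply div_le_div_of_nonneg_left (by positivity) (by positivity)
  nlinarith

lemma numeric_neg : (∑' n : ℕ, (-9/4 : ℝ) ^ n / ((n ! : ℝ)) ^ 2) < 0 := by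
  have Sa := numeric_summable
  rw [← Sa.sum_add_tsum_nat_add 4]
  have hpart : (∑ i ∈ Finset.range 4, (-9/4 : ℝ) ^ i / ((i ! : ℝ)) ^ 2) = -77/256 := by
    norm_num [Finset.sum_range_succ, Nat.factorial]
  have hsum_bound : Summable (fun n : ℕ => (729/16384 : ℝ) * (9/100) ^ n) :=
    (summable_geometric_of_lt_one (by norm_num) (by norm_num)).mul_left _
  have habs : ∀ n : ℕ, ‖(-9/4 : ℝ) ^ (n + 4) / (((n + 4)! : ℝ)) ^ 2‖
      ≤ (729/16384 : ℝ) * (9/100) ^ n := by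
    intro n
    rw [Real.norm_eq_abs, abs_div, abs_pow, show |(-9/4 : ℝ)| = 9/4 by norm_num,
      abs_of_nonneg (by positivity : (0:ℝ) ≤ ((((n+4)! : ℕ)) : ℝ) ^ 2)]
    exact numeric_tail_bound n
  have htail : |∑' n : ℕ, (-9/4 : ℝ) ^ (n + 4) / (((n + 4)! : ℝ)) ^ 2|
      ≤ (729/16384 : ℝ) * (1 - 9/100)⁻¹ := by
    have hs2 : Summable (fun n : ℕ => ‖(-9/4 : ℝ) ^ (n + 4) / (((n + 4)! : ℝ)) ^ 2‖) :=
      Summable.of_nonneg_of_le (fun n => norm_nonneg _) habs hsum_bound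
    calc |∑' n : ℕ, (-9/4 : ℝ) ^ (n + 4) / (((n + 4)! : ℝ)) ^ 2|
        ≤ ∑' n : ℕ, ‖(-9/4 : ℝ) ^ (n + 4) / (((n + 4)! : ℝ)) ^ 2‖ :=
          norm_tsum_le_tsum_norm hs2
      _ ≤ ∑' n : ℕ, (729/16384 : ℝ) * (9/100) ^ n := Summable.tsum_le_tsum habs hs2 hsum_bound
      _ = (729/16384 : ℝ) * (1 - 9/100)⁻¹ := by
          rw [tsum_mul_left, tsum_geometric_of_lt_one (by norm_num) (by norm_num)]
  rw [hpart]
  have := abs_le.mp htail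
  have h2 : (729/16384 : ℝ) * (1 - 9/100)⁻¹ < 77/256 := by norm_num
  linarith [this.2]

lemma summable_aux3 (B : ℝ) (hB : 0 ≤ B) :
    Summable (fun n : ℕ => ((n:ℝ) + 1) * B ^ n / Real.sqrt (n !)) := by
  refine Summable.of_nonneg_of_le (fun n => by positivity) (fun n => ?_)
    (summable_aux2 (2 * B) (by positivity))
  have h2 : ((n:ℝ)+1) ≤ 2 ^ n := by exact_mod_cast Nat.lt_two_pow_self (n := n)
  rw [mul_pow]
  rw [div_le_div_iff_of_pos_right (by positivity : (0:ℝ) < Real.sqrt (n !))]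
  calc ((n:ℝ) + 1) * B ^ n ≤ 2 ^ n * B ^ n := by
        apply mul_le_mul_of_nonneg_right h2 (by positivity)
    _ = 2 ^ n * B ^ n := rfl

-- norm bound for the integrand terms
lemma term_norm_bound (η s : ℝ) (n : ℕ) (u : ℝ) :
    ‖((-η) ^ n / (n ! : ℝ) ^ 2 * (aeval u (hermite n))) * Real.exp (s * u - u ^ 2 / 2)‖
      ≤ (2 * Real.exp (s ^ 2) * (((n:ℝ) + 1) * (2 * |η|) ^ n / Real.sqrt (n !)))
          * Real.exp (-(1/8) * u ^ 2) := by
  have hfac : (0:ℝ) < (n ! : ℝ) := by positivity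
  have hsq : Real.sqrt (n !) * Real.sqrt (n !) = (n ! : ℝ) :=
    Real.mul_self_sqrt (by positivity)
  have hspos : (0:ℝ) < Real.sqrt (n !) := Real.sqrt_pos.mpr hfac
  have hM : (1:ℝ) ≤ max 1 |u| := le_max_left _ _
  have hMn : (max 1 |u|) ^ n ≤ 2 * (2 ^ n * Real.sqrt (n !) * Real.exp (u ^ 2 / 8)) := by
    rcases max_cases 1 |u| with ⟨h, _⟩ | ⟨h, _⟩
    · rw [h, one_pow]
      have h1 : (1:ℝ) ≤ 2 ^ n := one_le_pow₀ (by norm_num)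
      have h2 : (1:ℝ) ≤ Real.sqrt (n !) := by
        rw [show (1:ℝ) = Real.sqrt 1 by simp]
        exact Real.sqrt_le_sqrt (by exact_mod_cast Nat.one_le_iff_ne_zero.mpr (Nat.factorial_ne_zero n))
      have e1 : (1:ℝ) ≤ Real.exp (u ^ 2 / 8) := Real.one_le_exp (by positivity)
      have h12 : (1:ℝ) ≤ 2 ^ n * Real.sqrt (n !) := by nlinarith
      nlinarith
    · rw [h]
      have := abs_pow_le_aux n u
      nlinarith [pow_nonneg (abs_nonneg u) n]
  have hw : Real.exp (s * u - u ^ 2 / 2) ≤ Real.exp (s ^ 2) * Real.exp (-(1/4) * u ^ 2) := by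
    rw [← Real.exp_add]
    apply Real.exp_le_exp.mpr
    nlinarith [sq_nonneg (s - u / 2)]
  have heval := herm_eval_bound n u
  rw [Real.norm_eq_abs, abs_mul, abs_mul, abs_div, abs_pow, abs_pow, abs_neg,
    abs_of_nonneg hfac.le, abs_of_pos (Real.exp_pos _)]
  calc |η| ^ n / (n ! : ℝ) ^ 2 * |aeval u (hermite n)| * Real.exp (s * u - u ^ 2 / 2)
      ≤ |η| ^ n / (n ! : ℝ) ^ 2 * (((n:ℝ) + 1) * n ! * (max 1 |u|) ^ n)
          * (Real.exp (s ^ 2) * Real.exp (-(1/4) * u ^ 2)) := by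
        apply mul_le_mul ?_ hw (Real.exp_pos _).le ?_
        · apply mul_le_mul_of_nonneg_left heval (by positivity)
        · positivity
    _ ≤ |η| ^ n / (n ! : ℝ) ^ 2 * (((n:ℝ) + 1) * n !
          * (2 * (2 ^ n * Real.sqrt (n !) * Real.exp (u ^ 2 / 8))))
          * (Real.exp (s ^ 2) * Real.exp (-(1/4) * u ^ 2)) := by
        apply mul_le_mul_of_nonneg_right ?_ (by positivity)
        apply mul_le_mul_of_nonneg_left ?_ (by positivity)
        apply mul_le_mul_of_nonneg_left hMn (by positivity)
    _ = (2 * Real.exp (s ^ 2) * (((n:ℝ) + 1) * (2 * |η|) ^ n / Real.sqrt (n !)))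
          * (Real.exp (u ^ 2 / 8) * Real.exp (-(1/4) * u ^ 2)) := by
        have ht : (n ! : ℝ) = Real.sqrt (n !) * Real.sqrt (n !) := hsq.symm
        rw [mul_pow, ht]
        field_simp
        ring_nf
        rw [Real.sq_sqrt (by positivity : (0:ℝ) ≤ (n ! : ℝ)), ht]
        ring
        rw [Real.sqrt_sq (Real.sqrt_nonneg _)]
    _ = (2 * Real.exp (s ^ 2) * (((n:ℝ) + 1) * (2 * |η|) ^ n / Real.sqrt (n !)))
          * Real.exp (-(1/8) * u ^ 2) := by
        rw [← Real.exp_add]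
        congr 2
        ring

lemma term_integrable (η s : ℝ) (n : ℕ) :
    Integrable (fun u : ℝ =>
      ((-η) ^ n / (n ! : ℝ) ^ 2 * (aeval u (hermite n))) * Real.exp (s * u - u ^ 2 / 2)) := by
  have heq : (fun u : ℝ =>
      ((-η) ^ n / (n ! : ℝ) ^ 2 * (aeval u (hermite n))) * Real.exp (s * u - u ^ 2 / 2))
      = fun u : ℝ => ((-η) ^ n / (n ! : ℝ) ^ 2)
          * ((Ph n).eval u * Real.exp (s * u - u ^ 2 / 2)) := by
    funext u; rw [aeval_hermite_eq]; ring
  rw [heq]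
  exact (integrable_poly_gauss (Ph n) s).const_mul _

lemma term_norm_integral_summable (η s : ℝ) :
    Summable (fun n : ℕ => ∫ u : ℝ,
      ‖((-η) ^ n / (n ! : ℝ) ^ 2 * (aeval u (hermite n))) * Real.exp (s * u - u ^ 2 / 2)‖) := by
  set K := ∫ u : ℝ, Real.exp (-(1/8) * u ^ 2) with hK
  have hKint : Integrable (fun u : ℝ => Real.exp (-(1/8) * u ^ 2)) :=
    integrable_exp_neg_mul_sq (by norm_num)
  have hbound : ∀ n : ℕ, (∫ u : ℝ,
      ‖((-η) ^ n / (n ! : ℝ) ^ 2 * (aeval u (hermite n))) * Real.exp (s * u - u ^ 2 / 2)‖)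
      ≤ (2 * Real.exp (s ^ 2) * (((n:ℝ) + 1) * (2 * |η|) ^ n / Real.sqrt (n !))) * K := by
    intro n
    rw [hK, ← integral_const_mul]
    apply integral_mono_of_nonneg (Filter.Eventually.of_forall fun u => norm_nonneg _)
      (hKint.const_mul _)
    exact Filter.Eventually.of_forall fun u => term_norm_bound η s n u
  have hsum : Summable (fun n : ℕ =>
      (2 * Real.exp (s ^ 2) * (((n:ℝ) + 1) * (2 * |η|) ^ n / Real.sqrt (n !))) * K) := by
    apply Summable.mul_right
    apply Summable.mul_left
    exact summable_aux3 (2 * |η|) (by positivity)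
  exact Summable.of_nonneg_of_le
    (fun n => integral_nonneg fun u => norm_nonneg _) hbound hsum

/-- For `η ≠ 0` and `y₀ > 0`, the Hermite series
`b(u) = y₀ ∑_{n≥0} ((−η)ⁿ/(n!)²) Hₙ(u)` converges for every `u ∈ ℝ`, and the resulting
function `b` takes a negative value somewhere. -/
theorem hermite_series_not_nonneg (η y₀ : ℝ) (hη : η ≠ 0) (hy₀ : 0 < y₀)
    (b : ℝ → ℝ)
    (hb : ∀ u : ℝ,
      b u = y₀ * ∑' n : ℕ, ((-η) ^ n / (Nat.factorial n : ℝ) ^ 2) *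
        (Polynomial.aeval u) (Polynomial.hermite n)) :
    (∀ u : ℝ, Summable fun n : ℕ =>
      ((-η) ^ n / (Nat.factorial n : ℝ) ^ 2) * (Polynomial.aeval u) (Polynomial.hermite n)) ∧
    ∃ u : ℝ, b u < 0 := by
  constructor
  · intro u
    apply Summable.of_norm_bounded
      (g := fun n : ℕ => ((n:ℝ) + 1) * (|η| * max 1 |u|) ^ n / n !)
      (summable_aux1 (|η| * max 1 |u|) (by positivity))
    intro n
    have heval := herm_eval_bound n u
    have hfac : (0:ℝ) < (n ! : ℝ) := by positivity
    rw [Real.norm_eq_abs, abs_mul, abs_div, abs_pow, abs_pow, abs_neg,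
      abs_of_nonneg (by positivity : (0:ℝ) ≤ (n ! : ℝ))]
    calc |η| ^ n / (n ! : ℝ) ^ 2 * |aeval u (hermite n)|
        ≤ |η| ^ n / (n ! : ℝ) ^ 2 * (((n:ℝ) + 1) * n ! * (max 1 |u|) ^ n) :=
          mul_le_mul_of_nonneg_left heval (by positivity)
      _ = ((n:ℝ) + 1) * (|η| * max 1 |u|) ^ n / n ! := by
          rw [mul_pow]; field_simp
  · by_contra hneg
    push_neg at hneg
    set s : ℝ := 9 / (4 * η) with hs
    have hbase : (-η) * s = -9/4 := by
      rw [hs]; field_simp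
    set G : ℝ := Real.sqrt (2 * π) * Real.exp (s ^ 2 / 2) with hG
    have hGpos : 0 < G := by
      apply mul_pos _ (Real.exp_pos _)
      exact Real.sqrt_pos.mpr (by positivity)
    have hint : ∀ n : ℕ, Integrable (fun u : ℝ =>
        ((-η) ^ n / (n ! : ℝ) ^ 2 * (aeval u (hermite n))) * Real.exp (s * u - u ^ 2 / 2)) :=
      term_integrable η s
    have hsum := term_norm_integral_summable η s
    have key := integral_tsum_of_summable_integral_norm hint hsum
    have h0 : 0 ≤ ∫ u : ℝ, b u * Real.exp (s * u - u ^ 2 / 2) :=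
      integral_nonneg fun u => mul_nonneg (hneg u) (Real.exp_pos _).le
    have hfun : (fun u : ℝ => b u * Real.exp (s * u - u ^ 2 / 2))
        = fun u : ℝ => y₀ * ∑' n : ℕ,
            ((-η) ^ n / (n ! : ℝ) ^ 2 * (aeval u (hermite n))) * Real.exp (s * u - u ^ 2 / 2) := by
      funext u
      rw [hb u, mul_assoc, tsum_mul_right]
    have hIn : ∀ n : ℕ, (∫ u : ℝ,
        ((-η) ^ n / (n ! : ℝ) ^ 2 * (aeval u (hermite n))) * Real.exp (s * u - u ^ 2 / 2))
        = (-9/4 : ℝ) ^ n / (n ! : ℝ) ^ 2 * G := by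
      intro n
      have heq : (fun u : ℝ =>
          ((-η) ^ n / (n ! : ℝ) ^ 2 * (aeval u (hermite n))) * Real.exp (s * u - u ^ 2 / 2))
          = fun u : ℝ => ((-η) ^ n / (n ! : ℝ) ^ 2)
              * ((Ph n).eval u * Real.exp (s * u - u ^ 2 / 2)) := by
        funext u; rw [aeval_hermite_eq]; ring
      rw [heq, integral_const_mul, integral_hermite_gauss, hG]
      rw [show ((-η) ^ n / (n ! : ℝ) ^ 2) * (s ^ n * (Real.sqrt (2 * π) * Real.exp (s ^ 2 / 2)))
          = (((-η) * s) ^ n / (n ! : ℝ) ^ 2) * (Real.sqrt (2 * π) * Real.exp (s ^ 2 / 2)) by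
        rw [mul_pow]; ring]
      rw [hbase]
    have hI : (∫ u : ℝ, b u * Real.exp (s * u - u ^ 2 / 2))
        = y₀ * ((∑' n : ℕ, (-9/4 : ℝ) ^ n / (n ! : ℝ) ^ 2) * G) := by
      rw [hfun, integral_const_mul, ← key]
      congr 1
      rw [← tsum_mul_right]
      exact tsum_congr fun n => by rw [hIn n]
    have hneg2 : y₀ * ((∑' n : ℕ, (-9/4 : ℝ) ^ n / (n ! : ℝ) ^ 2) * G) < 0 :=
      mul_neg_of_pos_of_neg hy₀ (mul_neg_of_neg_of_pos numeric_neg hGpos)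
    rw [hI] at h0
    linarith
end

section
/- Let 0 < T < 1, X > 0, θ > 0 and y₀ ∈ ℝ. Let λ(s,a) = 1/((1 − T + s)(θ⁻¹ + X − a)) and let f(y) = ∑_{n≥0} yⁿ/(n!)². Then any continuous function m : [0,T] × [0,X] → ℝ satisfying m(t,x) = y₀ + ∫₀ᵗ ∫₀ˣ λ(s,a) m(s,a) da ds for all (t,x) ∈ [0,T] × [0,X] satisfies m(T,X) = y₀ · f( −log(1 − T) · log(1 + Xθ) ). -/
open Set

lemma aux_incr (c : ℝ) (hc : 0 < c) (t : ℝ) (ht : 0 ≤ t) (k : ℕ) :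
    ∫ s in (0:ℝ)..t, (Real.log (c + s) - Real.log c) ^ k / (c + s)
      = (Real.log (c + t) - Real.log c) ^ (k + 1) / (k + 1) := by
  have hpos : ∀ s ∈ uIcc (0:ℝ) t, 0 < c + s := by
    intro s hs
    rw [uIcc_of_le ht] at hs
    linarith [hs.1]
  have key : ∀ s ∈ uIcc (0:ℝ) t,
      HasDerivAt (fun u => (Real.log (c + u) - Real.log c) ^ (k + 1) / (k + 1))
        ((Real.log (c + s) - Real.log c) ^ k / (c + s)) s := by
    intro s hs
    have hcs : 0 < c + s := hpos s hs
    have h1 : HasDerivAt (fun u => Real.log (c + u) - Real.log c) ((c + s)⁻¹) s := by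
      have h0 : HasDerivAt (fun u : ℝ => c + u) 1 s := (hasDerivAt_id s).const_add c
      have := (Real.hasDerivAt_log hcs.ne').comp s h0
      simpa using this.sub_const (Real.log c)
    have h2 := (h1.pow (k + 1)).div_const ((k : ℝ) + 1)
    refine h2.congr_deriv ?_
    have hk : ((k : ℝ) + 1) ≠ 0 := by positivity
    simp only [Nat.add_sub_cancel, Nat.cast_add, Nat.cast_one]
    field_simp
  have hcont : ContinuousOn (fun s => (Real.log (c + s) - Real.log c) ^ k / (c + s))
      (uIcc (0:ℝ) t) := by
    apply ContinuousOn.div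
    · apply ContinuousOn.pow
      apply ContinuousOn.sub _ continuousOn_const
      exact Real.continuousOn_log.comp (by fun_prop) (fun s hs => (hpos s hs).ne')
    · fun_prop
    · exact fun s hs => (hpos s hs).ne'
  rw [intervalIntegral.integral_eq_sub_of_hasDerivAt key hcont.intervalIntegrable]
  simp

lemma aux_decr (d : ℝ) (x : ℝ) (hx : 0 ≤ x) (hd : x < d) (k : ℕ) :
    ∫ a in (0:ℝ)..x, (Real.log d - Real.log (d - a)) ^ k / (d - a)
      = (Real.log d - Real.log (d - x)) ^ (k + 1) / (k + 1) := by
  have hpos : ∀ a ∈ uIcc (0:ℝ) x, 0 < d - a := by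
    intro a ha
    rw [uIcc_of_le hx] at ha
    linarith [ha.2]
  have key : ∀ a ∈ uIcc (0:ℝ) x,
      HasDerivAt (fun u => (Real.log d - Real.log (d - u)) ^ (k + 1) / (k + 1))
        ((Real.log d - Real.log (d - a)) ^ k / (d - a)) a := by
    intro a ha
    have hda : 0 < d - a := hpos a ha
    have h1 : HasDerivAt (fun u => Real.log d - Real.log (d - u)) ((d - a)⁻¹) a := by
      have h0 : HasDerivAt (fun u : ℝ => d - u) (-1) a := by
        simpa using (hasDerivAt_id a).const_sub d
      have := (Real.hasDerivAt_log hda.ne').comp a h0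
      have h2 := this.const_sub (Real.log d)
      refine h2.congr_deriv ?_
      ring
    have h2 := (h1.pow (k + 1)).div_const ((k : ℝ) + 1)
    refine h2.congr_deriv ?_
    have hk : ((k : ℝ) + 1) ≠ 0 := by positivity
    simp only [Nat.add_sub_cancel, Nat.cast_add, Nat.cast_one]
    field_simp
  have hcont : ContinuousOn (fun a => (Real.log d - Real.log (d - a)) ^ k / (d - a))
      (uIcc (0:ℝ) x) := by
    apply ContinuousOn.div
    · apply ContinuousOn.pow
      apply ContinuousOn.sub continuousOn_const
      exact Real.continuousOn_log.comp (by fun_prop) (fun a ha => (hpos a ha).ne')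
    · fun_prop
    · exact fun a ha => (hpos a ha).ne'
  rw [intervalIntegral.integral_eq_sub_of_hasDerivAt key hcont.intervalIntegrable]
  simp


/-- For `0 < T < 1`, `X > 0`, `θ > 0`, `y₀ ∈ ℝ`, with kernel
`λ(s,a) = 1/((1 − T + s)(θ⁻¹ + X − a))` and `f(y) = ∑_{n≥0} yⁿ/(n!)²`, any continuous `m` on
`[0,T] × [0,X]` satisfying `m(t,x) = y₀ + ∫₀ᵗ ∫₀ˣ λ(s,a) m(s,a) da ds` satisfies
`m(T,X) = y₀ · f(−log(1 − T)·log(1 + Xθ))`. -/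
theorem volterra_terminal_value (T X θ y₀ : ℝ)
    (hT0 : 0 < T) (hT1 : T < 1) (hX : 0 < X) (hθ : 0 < θ)
    (lam : ℝ → ℝ → ℝ)
    (hlam : ∀ s a : ℝ, lam s a = 1 / ((1 - T + s) * (θ⁻¹ + X - a)))
    (f : ℝ → ℝ)
    (hf : ∀ y : ℝ, f y = ∑' n : ℕ, y ^ n / (Nat.factorial n : ℝ) ^ 2)
    (m : ℝ → ℝ → ℝ)
    (hmc : ContinuousOn (fun p : ℝ × ℝ => m p.1 p.2) (Icc 0 T ×ˢ Icc 0 X))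
    (hm : ∀ t ∈ Icc (0 : ℝ) T, ∀ x ∈ Icc (0 : ℝ) X,
      m t x = y₀ + ∫ s in (0 : ℝ)..t, ∫ a in (0 : ℝ)..x, lam s a * m s a) :
    m T X = y₀ * f (-Real.log (1 - T) * Real.log (1 + X * θ)) := by
  have hc0 : (0:ℝ) < 1 - T := by linarith
  have hθi : (0:ℝ) < θ⁻¹ := by positivity
  have hd0 : (0:ℝ) < θ⁻¹ + X := by linarith
  have hXd : X < θ⁻¹ + X := by linarith
  obtain ⟨L, hL⟩ : ∃ g : ℝ → ℝ, g = fun s => Real.log (1 - T + s) - Real.log (1 - T) := ⟨_, rfl⟩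
  obtain ⟨M, hM⟩ : ∃ g : ℝ → ℝ, g = fun a => Real.log (θ⁻¹ + X) - Real.log (θ⁻¹ + X - a) :=
    ⟨_, rfl⟩
  obtain ⟨P, hP⟩ : ∃ g : ℕ → ℝ → ℝ → ℝ, g = fun n t x =>
      ∑ k ∈ Finset.range n, (L t * M x) ^ k / (Nat.factorial k : ℝ) ^ 2 := ⟨_, rfl⟩
  -- continuity of L and M
  have hLc : ContinuousOn L (Icc (0:ℝ) T) := by
    rw [hL]
    apply ContinuousOn.sub _ continuousOn_const
    apply Real.continuousOn_log.comp (by fun_prop)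
    intro s hs
    have : (0:ℝ) < 1 - T + s := by have := hs.1; linarith
    exact this.ne'
  have hMc : ContinuousOn M (Icc (0:ℝ) X) := by
    rw [hM]
    apply ContinuousOn.sub continuousOn_const
    apply Real.continuousOn_log.comp (by fun_prop)
    intro a ha
    have : (0:ℝ) < θ⁻¹ + X - a := by have := ha.2; linarith
    exact this.ne'
  have hMcx : ∀ x ∈ Icc (0:ℝ) X, ContinuousOn M (uIcc (0:ℝ) x) := by
    intro x hx
    rw [uIcc_of_le hx.1]
    exact hMc.mono (Icc_subset_Icc le_rfl hx.2)
  -- inner integral of a single power term, valid for every real `s`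
  have hterm : ∀ s : ℝ, ∀ k : ℕ, (fun a => lam s a * ((L s * M a) ^ k / (Nat.factorial k : ℝ) ^ 2))
      = fun a => ((L s) ^ k / (Nat.factorial k : ℝ) ^ 2 * (1 - T + s)⁻¹)
          * ((M a) ^ k / (θ⁻¹ + X - a)) := by
    intro s k
    funext a
    rw [hlam, one_div, mul_inv]
    ring
  have htermint : ∀ x ∈ Icc (0:ℝ) X, ∀ s : ℝ, ∀ k : ℕ,
      IntervalIntegrable (fun a => lam s a * ((L s * M a) ^ k / (Nat.factorial k : ℝ) ^ 2))
        MeasureTheory.volume 0 x := by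
    intro x hx s k
    rw [hterm]
    apply ContinuousOn.intervalIntegrable
    apply ContinuousOn.mul continuousOn_const
    apply ContinuousOn.div ((hMcx x hx).pow k) (by fun_prop)
    intro a ha
    rw [uIcc_of_le hx.1] at ha
    have h2 := hx.2
    have : (0:ℝ) < θ⁻¹ + X - a := by have := ha.2; linarith
    exact this.ne'
  have hinner : ∀ x ∈ Icc (0:ℝ) X, ∀ s : ℝ, ∀ k : ℕ,
      (∫ a in (0:ℝ)..x, lam s a * ((L s * M a) ^ k / (Nat.factorial k : ℝ) ^ 2))
        = ((L s) ^ k / (Nat.factorial k : ℝ) ^ 2 * (1 - T + s)⁻¹)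
            * ((M x) ^ (k + 1) / (k + 1)) := by
    intro x hx s k
    rw [hterm, intervalIntegral.integral_const_mul]
    congr 1
    have := aux_decr (θ⁻¹ + X) x hx.1 (lt_of_le_of_lt hx.2 hXd) k
    simp only [hM]
    exact this
  -- inner integral of `lam * P n`
  have hA : ∀ n : ℕ, ∀ x ∈ Icc (0:ℝ) X, ∀ s : ℝ,
      (∫ a in (0:ℝ)..x, lam s a * P n s a)
        = ∑ k ∈ Finset.range n, ((L s) ^ k / (Nat.factorial k : ℝ) ^ 2 * (1 - T + s)⁻¹)
            * ((M x) ^ (k + 1) / (k + 1)) := by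
    intro n x hx s
    have : (fun a => lam s a * P n s a)
        = fun a => ∑ k ∈ Finset.range n,
            lam s a * ((L s * M a) ^ k / (Nat.factorial k : ℝ) ^ 2) := by
      funext a
      rw [hP, Finset.mul_sum]
    rw [this, intervalIntegral.integral_finset_sum (fun k _ => htermint x hx s k)]
    exact Finset.sum_congr rfl (fun k _ => hinner x hx s k)
  -- the outer integral of a single term
  have houter : ∀ t ∈ Icc (0:ℝ) T, ∀ x ∈ Icc (0:ℝ) X, ∀ k : ℕ,
      (∫ s in (0:ℝ)..t, ((L s) ^ k / (Nat.factorial k : ℝ) ^ 2 * (1 - T + s)⁻¹)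
          * ((M x) ^ (k + 1) / (k + 1)))
        = (L t * M x) ^ (k + 1) / (Nat.factorial (k + 1) : ℝ) ^ 2 := by
    intro t ht x hx k
    have h1 : (fun s => ((L s) ^ k / (Nat.factorial k : ℝ) ^ 2 * (1 - T + s)⁻¹)
          * ((M x) ^ (k + 1) / (k + 1)))
        = fun s => ((M x) ^ (k + 1) / (k + 1) / (Nat.factorial k : ℝ) ^ 2)
            * ((L s) ^ k / (1 - T + s)) := by
      funext s
      ring
    rw [h1, intervalIntegral.integral_const_mul]
    have h2 : (∫ s in (0:ℝ)..t, (L s) ^ k / (1 - T + s))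
        = (L t) ^ (k + 1) / (k + 1) := by
      simp only [hL]
      exact aux_incr (1 - T) hc0 t ht.1 k
    rw [h2]
    have hk : ((k:ℝ) + 1) ≠ 0 := by positivity
    have hfk : ((Nat.factorial k : ℝ)) ≠ 0 := by
      exact_mod_cast Nat.factorial_ne_zero k
    rw [Nat.factorial_succ]
    push_cast
    field_simp
    ring
  -- double integral of `lam * P n`
  have hPint : ∀ n : ℕ, ∀ t ∈ Icc (0:ℝ) T, ∀ x ∈ Icc (0:ℝ) X,
      (∫ s in (0:ℝ)..t, ∫ a in (0:ℝ)..x, lam s a * P n s a) = P (n+1) t x - 1 := by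
    intro n t ht x hx
    rw [intervalIntegral.integral_congr (g := fun s => ∑ k ∈ Finset.range n,
        ((L s) ^ k / (Nat.factorial k : ℝ) ^ 2 * (1 - T + s)⁻¹)
          * ((M x) ^ (k + 1) / (k + 1))) (fun s _ => hA n x hx s)]
    have hint : ∀ k ∈ Finset.range n, IntervalIntegrable
        (fun s => ((L s) ^ k / (Nat.factorial k : ℝ) ^ 2 * (1 - T + s)⁻¹)
          * ((M x) ^ (k + 1) / (k + 1))) MeasureTheory.volume 0 t := by
      intro k _
      apply ContinuousOn.intervalIntegrable
      apply ContinuousOn.mul _ continuousOn_const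
      apply ContinuousOn.mul (ContinuousOn.div_const ((hLc.mono ?_).pow k) _)
      · apply ContinuousOn.inv₀ (by fun_prop)
        intro s hs
        rw [uIcc_of_le ht.1] at hs
        have : (0:ℝ) < 1 - T + s := by have := hs.1; linarith
        exact this.ne'
      · rw [uIcc_of_le ht.1]
        exact Icc_subset_Icc le_rfl ht.2
    rw [intervalIntegral.integral_finset_sum hint]
    rw [Finset.sum_congr rfl (fun k _ => houter t ht x hx k)]
    simp only [hP]
    rw [Finset.sum_range_succ']
    simp
  -- continuous extension of m
  have hK : IsClosed (Icc (0:ℝ) T ×ˢ Icc (0:ℝ) X) := isClosed_Icc.prod isClosed_Icc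
  obtain ⟨g, hg⟩ := ContinuousMap.exists_restrict_eq (Y := ℝ) hK
    ⟨(Icc (0:ℝ) T ×ˢ Icc (0:ℝ) X).restrict (fun p : ℝ × ℝ => m p.1 p.2), hmc.restrict⟩
  have hgm : ∀ p : ℝ × ℝ, p ∈ Icc (0:ℝ) T ×ˢ Icc (0:ℝ) X → g p = m p.1 p.2 := by
    intro p hp
    have := DFunLike.congr_fun hg (⟨p, hp⟩ : (Icc (0:ℝ) T ×ˢ Icc (0:ℝ) X : Set (ℝ × ℝ)))
    exact this
  -- globally continuous version of the kernel times m
  obtain ⟨F, hF⟩ : ∃ F : ℝ → ℝ → ℝ, F = fun s a =>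
      (max (1 - T) (1 - T + s))⁻¹ * (max θ⁻¹ (θ⁻¹ + X - a))⁻¹ * g (s, a) := ⟨_, rfl⟩
  have hFcont : Continuous (Function.uncurry F) := by
    rw [hF]
    apply Continuous.mul _ (by fun_prop)
    apply Continuous.mul
    · apply Continuous.inv₀ (by fun_prop)
      intro s
      have : (0:ℝ) < max (1 - T) (1 - T + s.1) := lt_max_of_lt_left hc0
      exact this.ne'
    · apply Continuous.inv₀ (by fun_prop)
      intro p
      have : (0:ℝ) < max θ⁻¹ (θ⁻¹ + X - p.2) := lt_max_of_lt_left hθi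
      exact this.ne'
  have hFeq : ∀ s ∈ Icc (0:ℝ) T, ∀ a ∈ Icc (0:ℝ) X, F s a = lam s a * m s a := by
    intro s hs a ha
    simp only [hF]
    rw [hlam]
    have h1 : max (1 - T) (1 - T + s) = 1 - T + s := max_eq_right (by linarith [hs.1])
    have h2 : max θ⁻¹ (θ⁻¹ + X - a) = θ⁻¹ + X - a := max_eq_right (by linarith [ha.2])
    rw [h1, h2, hgm (s, a) ⟨hs, ha⟩]
    have hs1 : (0:ℝ) < 1 - T + s := by have := hs.1; linarith
    have ha1 : (0:ℝ) < θ⁻¹ + X - a := by have := ha.2; linarith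
    rw [one_div, mul_inv]
  -- bound on m
  obtain ⟨B, hB⟩ := (isCompact_Icc.prod isCompact_Icc).exists_bound_of_continuousOn hmc
  have hB0 : 0 ≤ B :=
    le_trans (norm_nonneg _) (hB (0, 0) ⟨⟨le_rfl, hT0.le⟩, ⟨le_rfl, hX.le⟩⟩)
  -- bound on the kernel
  have hlam_bound : ∀ s ∈ Icc (0:ℝ) T, ∀ a ∈ Icc (0:ℝ) X,
      0 ≤ lam s a ∧ lam s a ≤ θ / (1 - T) := by
    intro s hs a ha
    rw [hlam]
    have h1 : (1 - T : ℝ) ≤ 1 - T + s := by linarith [hs.1]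
    have h2 : θ⁻¹ ≤ θ⁻¹ + X - a := by linarith [ha.2]
    have hth : (0:ℝ) < (1 - T) * θ⁻¹ := by positivity
    have hden : (1 - T) * θ⁻¹ ≤ (1 - T + s) * (θ⁻¹ + X - a) :=
      mul_le_mul h1 h2 hθi.le (by linarith)
    have hs1 : (0:ℝ) < 1 - T + s := by linarith [hs.1]
    have ha1 : (0:ℝ) < θ⁻¹ + X - a := by linarith [ha.2]
    constructor
    · positivity
    · calc 1 / ((1 - T + s) * (θ⁻¹ + X - a)) ≤ 1 / ((1 - T) * θ⁻¹) :=
            one_div_le_one_div_of_le hth hden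
        _ = θ / (1 - T) := by field_simp
  -- continuity facts
  have hmscont : ∀ s ∈ Icc (0:ℝ) T, ContinuousOn (fun a => m s a) (Icc (0:ℝ) X) := by
    intro s hs
    have e : (fun a => m s a) = (fun p : ℝ × ℝ => m p.1 p.2) ∘ (fun a => (s, a)) := rfl
    rw [e]
    exact hmc.comp (Continuous.continuousOn (by fun_prop)) (fun a ha => ⟨hs, ha⟩)
  have hlamc : ∀ s ∈ Icc (0:ℝ) T, ContinuousOn (fun a => lam s a) (Icc (0:ℝ) X) := by
    intro s hs
    have h : (fun a => lam s a) = fun a => 1 / ((1 - T + s) * (θ⁻¹ + X - a)) := by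
      funext a; rw [hlam]
    rw [h]
    apply ContinuousOn.div continuousOn_const (by fun_prop)
    intro a ha
    have h1 : (0:ℝ) < 1 - T + s := by linarith [hs.1]
    have h2 : (0:ℝ) < θ⁻¹ + X - a := by linarith [ha.2]
    positivity
  have hPc : ∀ n : ℕ, ∀ s : ℝ, ContinuousOn (fun a => P n s a) (Icc (0:ℝ) X) := by
    intro n s
    simp only [hP]
    apply continuousOn_finset_sum
    intro k _
    exact (ContinuousOn.pow (continuousOn_const.mul hMc) k).div_const _
  -- the main induction
  have hkey : ∀ n : ℕ, ∀ t ∈ Icc (0:ℝ) T, ∀ x ∈ Icc (0:ℝ) X,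
      |m t x - y₀ * P n t x| ≤ B * (θ / (1 - T) * t * x) ^ n / (Nat.factorial n : ℝ) ^ 2 := by
    intro n
    induction n with
    | zero =>
      intro t ht x hx
      simp only [hP, Finset.range_zero, Finset.sum_empty, mul_zero, sub_zero, pow_zero,
        Nat.factorial_zero]
      have := hB (t, x) ⟨ht, hx⟩
      rw [Real.norm_eq_abs] at this
      simpa using this
    | succ n ih =>
      intro t ht x hx
      have hIx : Icc (0:ℝ) x ⊆ Icc (0:ℝ) X := Icc_subset_Icc le_rfl hx.2
      have hIt : Icc (0:ℝ) t ⊆ Icc (0:ℝ) T := Icc_subset_Icc le_rfl ht.2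
      have hint1 : ∀ s ∈ Icc (0:ℝ) T, IntervalIntegrable
          (fun a => lam s a * (y₀ * P n s a)) MeasureTheory.volume 0 x := by
        intro s hs
        apply ContinuousOn.intervalIntegrable
        rw [uIcc_of_le hx.1]
        exact ((hlamc s hs).mono hIx).mul (continuousOn_const.mul ((hPc n s).mono hIx))
      have hint2 : ∀ s ∈ Icc (0:ℝ) T, IntervalIntegrable
          (fun a => lam s a * (m s a - y₀ * P n s a)) MeasureTheory.volume 0 x := by
        intro s hs
        apply ContinuousOn.intervalIntegrable
        rw [uIcc_of_le hx.1]
        exact ((hlamc s hs).mono hIx).mul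
          (((hmscont s hs).mono hIx).sub (continuousOn_const.mul ((hPc n s).mono hIx)))
      have hsplit : ∀ s ∈ Icc (0:ℝ) T,
          (∫ a in (0:ℝ)..x, lam s a * m s a)
            = y₀ * (∫ a in (0:ℝ)..x, lam s a * P n s a)
              + ∫ a in (0:ℝ)..x, lam s a * (m s a - y₀ * P n s a) := by
        intro s hs
        have e : (fun a => lam s a * m s a)
            = fun a => lam s a * (y₀ * P n s a) + lam s a * (m s a - y₀ * P n s a) := by
          funext a; ring
        rw [show (∫ a in (0:ℝ)..x, lam s a * m s a)
            = ∫ a in (0:ℝ)..x, (lam s a * (y₀ * P n s a)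
              + lam s a * (m s a - y₀ * P n s a)) from by rw [← e]]
        rw [intervalIntegral.integral_add (hint1 s hs) (hint2 s hs)]
        congr 1
        have e2 : (fun a => lam s a * (y₀ * P n s a)) = fun a => y₀ * (lam s a * P n s a) := by
          funext a; ring
        rw [e2, intervalIntegral.integral_const_mul]
      have hAc : ContinuousOn (fun s => ∫ a in (0:ℝ)..x, lam s a * P n s a) (Icc (0:ℝ) T) := by
        have e : EqOn (fun s => ∫ a in (0:ℝ)..x, lam s a * P n s a)
            (fun s => ∑ k ∈ Finset.range n, ((L s) ^ k / (Nat.factorial k : ℝ) ^ 2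
              * (1 - T + s)⁻¹) * ((M x) ^ (k + 1) / (k + 1))) (Icc (0:ℝ) T) :=
          fun s _ => hA n x hx s
        apply ContinuousOn.congr _ e
        apply continuousOn_finset_sum
        intro k _
        apply ContinuousOn.mul _ continuousOn_const
        apply ContinuousOn.mul ((hLc.pow k).div_const _)
        apply ContinuousOn.inv₀ (by fun_prop)
        intro s hs
        have : (0:ℝ) < 1 - T + s := by linarith [hs.1]
        exact this.ne'
      have hGc : Continuous (fun s => ∫ a in (0:ℝ)..x, F s a) :=
        intervalIntegral.continuous_parametric_intervalIntegral_of_continuous' hFcont 0 x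
      have hPhi : ∀ s ∈ Icc (0:ℝ) T,
          (∫ a in (0:ℝ)..x, lam s a * (m s a - y₀ * P n s a))
            = (∫ a in (0:ℝ)..x, F s a)
              - y₀ * (∫ a in (0:ℝ)..x, lam s a * P n s a) := by
        intro s hs
        have e : (∫ a in (0:ℝ)..x, F s a) = ∫ a in (0:ℝ)..x, lam s a * m s a := by
          apply intervalIntegral.integral_congr
          intro a ha
          rw [uIcc_of_le hx.1] at ha
          exact hFeq s hs a (hIx ha)
        rw [e, hsplit s hs]
        ring
      have hPhic : ContinuousOn
          (fun s => (∫ a in (0:ℝ)..x, F s a)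
            - y₀ * (∫ a in (0:ℝ)..x, lam s a * P n s a)) (Icc (0:ℝ) T) :=
        (hGc.continuousOn).sub (continuousOn_const.mul hAc)
      have hmain : m t x - y₀ * P (n+1) t x
          = ∫ s in (0:ℝ)..t, ((∫ a in (0:ℝ)..x, F s a)
              - y₀ * (∫ a in (0:ℝ)..x, lam s a * P n s a)) := by
        have h0 := hm t ht x hx
        rw [intervalIntegral.integral_congr (g := fun s =>
            y₀ * (∫ a in (0:ℝ)..x, lam s a * P n s a)
              + ((∫ a in (0:ℝ)..x, F s a)
                - y₀ * (∫ a in (0:ℝ)..x, lam s a * P n s a)))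
            (by
              intro s hs
              rw [uIcc_of_le ht.1] at hs
              have hsT := hIt hs
              simp only
              rw [hsplit s hsT, hPhi s hsT])] at h0
        rw [intervalIntegral.integral_add
            (by
              apply ContinuousOn.intervalIntegrable
              rw [uIcc_of_le ht.1]
              exact continuousOn_const.mul (hAc.mono hIt))
            (by
              apply ContinuousOn.intervalIntegrable
              rw [uIcc_of_le ht.1]
              exact hPhic.mono hIt)] at h0
        rw [intervalIntegral.integral_const_mul, hPint n t ht x hx] at h0
        rw [h0]; ring
      have hfz : ((Nat.factorial n : ℝ)) ≠ 0 := by exact_mod_cast Nat.factorial_ne_zero n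
      have hbound : ∀ s ∈ Icc (0:ℝ) t,
          |(∫ a in (0:ℝ)..x, F s a) - y₀ * (∫ a in (0:ℝ)..x, lam s a * P n s a)|
            ≤ ((θ/(1-T)) ^ (n+1) * B * x ^ (n+1) / ((n + 1) * (Nat.factorial n : ℝ) ^ 2))
                * s ^ n := by
        intro s hs
        have hsT : s ∈ Icc (0:ℝ) T := hIt hs
        rw [← hPhi s hsT]
        have step1 : |∫ a in (0:ℝ)..x, lam s a * (m s a - y₀ * P n s a)|
            ≤ ∫ a in (0:ℝ)..x, |lam s a * (m s a - y₀ * P n s a)| :=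
          intervalIntegral.abs_integral_le_integral_abs hx.1
        have step2 : (∫ a in (0:ℝ)..x, |lam s a * (m s a - y₀ * P n s a)|)
            ≤ ∫ a in (0:ℝ)..x, ((θ/(1-T)) ^ (n+1) * B * s ^ n / (Nat.factorial n : ℝ) ^ 2)
                * a ^ n := by
          apply intervalIntegral.integral_mono_on hx.1
          · apply ContinuousOn.intervalIntegrable
            rw [uIcc_of_le hx.1]
            exact (((hlamc s hsT).mono hIx).mul
              (((hmscont s hsT).mono hIx).sub
                (continuousOn_const.mul ((hPc n s).mono hIx)))).abs
          · apply ContinuousOn.intervalIntegrable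
            rw [uIcc_of_le hx.1]; fun_prop
          · intro a ha
            have haX : a ∈ Icc (0:ℝ) X := hIx ha
            have h1 := hlam_bound s hsT a haX
            have h2 := ih s hsT a haX
            rw [abs_mul]
            rw [abs_of_nonneg h1.1]
            calc lam s a * |m s a - y₀ * P n s a|
                ≤ (θ/(1-T)) * (B * (θ / (1 - T) * s * a) ^ n / (Nat.factorial n : ℝ) ^ 2) := by
                  apply mul_le_mul h1.2 h2 (abs_nonneg _) (by positivity)
              _ = ((θ/(1-T)) ^ (n+1) * B * s ^ n / (Nat.factorial n : ℝ) ^ 2) * a ^ n := by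
                  rw [mul_pow, mul_pow]
                  ring
        have step3 : (∫ a in (0:ℝ)..x, ((θ/(1-T)) ^ (n+1) * B * s ^ n
              / (Nat.factorial n : ℝ) ^ 2) * a ^ n)
            = ((θ/(1-T)) ^ (n+1) * B * s ^ n / (Nat.factorial n : ℝ) ^ 2)
                * (x ^ (n+1) / (n+1)) := by
          rw [intervalIntegral.integral_const_mul, integral_pow]
          norm_num
        calc |∫ a in (0:ℝ)..x, lam s a * (m s a - y₀ * P n s a)|
            ≤ ((θ/(1-T)) ^ (n+1) * B * s ^ n / (Nat.factorial n : ℝ) ^ 2)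
                * (x ^ (n+1) / (n+1)) := by
              rw [← step3]; exact le_trans step1 step2
          _ = ((θ/(1-T)) ^ (n+1) * B * x ^ (n+1) / ((n + 1) * (Nat.factorial n : ℝ) ^ 2))
                * s ^ n := by
              have hn1 : ((n:ℝ) + 1) ≠ 0 := by positivity
              field_simp
      rw [hmain]
      have habs : |∫ s in (0:ℝ)..t, ((∫ a in (0:ℝ)..x, F s a)
            - y₀ * (∫ a in (0:ℝ)..x, lam s a * P n s a))|
          ≤ ∫ s in (0:ℝ)..t, |(∫ a in (0:ℝ)..x, F s a)
            - y₀ * (∫ a in (0:ℝ)..x, lam s a * P n s a)| :=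
        intervalIntegral.abs_integral_le_integral_abs ht.1
      have hmono : (∫ s in (0:ℝ)..t, |(∫ a in (0:ℝ)..x, F s a)
            - y₀ * (∫ a in (0:ℝ)..x, lam s a * P n s a)|)
          ≤ ∫ s in (0:ℝ)..t,
              ((θ/(1-T)) ^ (n+1) * B * x ^ (n+1) / ((n + 1) * (Nat.factorial n : ℝ) ^ 2))
                * s ^ n := by
        apply intervalIntegral.integral_mono_on ht.1
        · apply ContinuousOn.intervalIntegrable
          rw [uIcc_of_le ht.1]
          exact (hPhic.mono hIt).abs
        · apply ContinuousOn.intervalIntegrable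
          rw [uIcc_of_le ht.1]; fun_prop
        · exact hbound
      have hval : (∫ s in (0:ℝ)..t,
            ((θ/(1-T)) ^ (n+1) * B * x ^ (n+1) / ((n + 1) * (Nat.factorial n : ℝ) ^ 2))
              * s ^ n)
          = B * (θ / (1 - T) * t * x) ^ (n+1) / (Nat.factorial (n+1) : ℝ) ^ 2 := by
        rw [intervalIntegral.integral_const_mul, integral_pow]
        rw [Nat.factorial_succ]
        have hn1 : ((n:ℝ) + 1) ≠ 0 := by positivity
        push_cast
        rw [mul_pow, mul_pow]
        field_simp
        ring
      rw [← hval]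
      exact le_trans habs hmono
  -- the limit value
  have hzX : L T * M X = -Real.log (1 - T) * Real.log (1 + X * θ) := by
    have e1 : L T = -Real.log (1 - T) := by
      simp only [hL]
      rw [show 1 - T + T = 1 from by ring, Real.log_one]
      ring
    have e2 : M X = Real.log (1 + X * θ) := by
      simp only [hM]
      rw [show θ⁻¹ + X - X = θ⁻¹ from by ring, Real.log_inv]
      rw [show 1 + X * θ = (θ⁻¹ + X) * θ from by field_simp]
      rw [Real.log_mul (by positivity) hθ.ne']
      ring
    rw [e1, e2]
  have hfle : ∀ k : ℕ, (1:ℝ) ≤ (Nat.factorial k : ℝ) := by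
    intro k
    exact_mod_cast Nat.one_le_iff_ne_zero.mpr (Nat.factorial_ne_zero k)
  have hsum : Summable (fun k : ℕ => (L T * M X) ^ k / (Nat.factorial k : ℝ) ^ 2) := by
    apply Summable.of_abs
    apply Summable.of_nonneg_of_le (fun k => abs_nonneg _) _
      (Real.summable_pow_div_factorial |L T * M X|)
    intro k
    have h1 := hfle k
    rw [abs_div, abs_pow, abs_of_nonneg (by positivity : (0:ℝ) ≤ (Nat.factorial k : ℝ) ^ 2)]
    apply div_le_div_of_nonneg_left (by positivity) (by linarith)
    nlinarith
  have hq0 : (0:ℝ) ≤ θ / (1 - T) * T * X :=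
    mul_nonneg (mul_nonneg (div_nonneg hθ.le hc0.le) hT0.le) hX.le
  have htendb : Filter.Tendsto
      (fun n : ℕ => B * ((θ / (1 - T) * T * X) ^ n / (Nat.factorial n : ℝ) ^ 2))
      Filter.atTop (nhds 0) := by
    apply squeeze_zero (fun n => by positivity)
      (g := fun n : ℕ => B * ((θ / (1 - T) * T * X) ^ n / (Nat.factorial n : ℝ)))
    · intro n
      apply mul_le_mul_of_nonneg_left _ hB0
      have h1 := hfle n
      apply div_le_div_of_nonneg_left (by positivity) (by linarith)
      nlinarith
    · have := (FloorSemiring.tendsto_pow_div_factorial_atTop (K := ℝ)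
        (θ / (1 - T) * T * X)).const_mul B
      simpa using this
  have ht2 : Filter.Tendsto (fun n => y₀ * P n T X) Filter.atTop (nhds (m T X)) := by
    have h1 : Filter.Tendsto (fun n => m T X - y₀ * P n T X) Filter.atTop (nhds 0) := by
      apply squeeze_zero_norm _ htendb
      intro n
      rw [Real.norm_eq_abs]
      exact le_of_le_of_eq (hkey n T ⟨hT0.le, le_rfl⟩ X ⟨hX.le, le_rfl⟩) (by ring)
    have h2 := Filter.Tendsto.const_sub (m T X) h1
    simpa using h2
  have ht1 : Filter.Tendsto (fun n => y₀ * P n T X) Filter.atTop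
      (nhds (y₀ * ∑' k : ℕ, (L T * M X) ^ k / (Nat.factorial k : ℝ) ^ 2)) := by
    apply Filter.Tendsto.const_mul
    have h := hsum.hasSum.tendsto_sum_nat
    simp only [hP]
    exact h
  have hfinal := tendsto_nhds_unique ht2 ht1
  rw [hfinal, hf, hzX]
end
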